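/- arXiv:2008.12524 — 12 statements merged into one kernel-verified Lean document; each statement's English description precedes it below -/
import Mathlib

section
/- Along any solution x(s) of the geodesic equation x'' = -λ B x with constraint (Bx,x)=1, where λ = (Bx',x')/(Bx,Bx), the Joachimsthal function J(x,x') = (Bx,Bx)(Bx',x') is constant: dJ/ds = 0. -/
/-- Conservation of the Joachimsthal integral J(x,x') = (Bx,Bx)(Bx',x')
along geodesics x'' = -λ Bx on the quadric (Bx,x)=1, where B = diag(b)
is an invertible diagonal matrix and λ = (Bx',x')/(Bx,Bx). -/
theorem joachimsthal_conserved (n : ℕ) (b : Fin (n+1) → ℝ) (hb : ∀ i, b i ≠ 0)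
    (x : ℝ → Fin (n+1) → ℝ)
    (hsmooth : ∀ i, ContDiff ℝ (⊤ : ℕ∞) (fun s => x s i))
    (hconstraint : ∀ s, ∑ i, b i * x s i * x s i = 1)
    (hgeo : ∀ s i, deriv (deriv (fun t => x t i)) s =
      -((∑ j, b j * deriv (fun t => x t j) s * deriv (fun t => x t j) s) /
        (∑ j, (b j * x s j)^2)) * (b i * x s i)) :
    ∀ s, deriv (fun t => (∑ i, (b i * x t i)^2) *
      (∑ i, b i * deriv (fun u => x u i) t * deriv (fun u => x u i) t)) s = 0 := by
  intro s
  have hx : ∀ i, Differentiable ℝ (fun t => x t i) :=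
    fun i => (hsmooth i).differentiable (by simp)
  have hx' : ∀ i, Differentiable ℝ (deriv (fun t => x t i)) := by
    intro i
    have h : ContDiff ℝ ((⊤ : ℕ∞) : WithTop ℕ∞) (fun t => x t i) := (hsmooth i).of_le (by simp)
    exact (contDiff_infty_iff_deriv.mp h).2.differentiable (by simp)
  set d : Fin (n+1) → ℝ := fun i => deriv (fun t => x t i) s with hd
  set dd : Fin (n+1) → ℝ := fun i => deriv (deriv (fun t => x t i)) s with hdd
  have hX : ∀ i, HasDerivAt (fun t => x t i) (d i) s :=
    fun i => ((hx i) s).hasDerivAt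
  have hX' : ∀ i, HasDerivAt (deriv (fun t => x t i)) (dd i) s :=
    fun i => ((hx' i) s).hasDerivAt
  set Ps : ℝ := ∑ i, (b i * x s i)^2 with hPs
  set Qs : ℝ := ∑ i, b i * d i * d i with hQs
  have hP : HasDerivAt (fun t => ∑ i, (b i * x t i)^2)
      (∑ i, 2 * (b i * x s i) * (b i * d i)) s := by
    apply HasDerivAt.fun_sum
    intro i _
    have h : HasDerivAt (fun y => (b i * x y i)^2) _ s := ((hX i).const_mul (b i)).pow 2
    simpa [mul_comm, mul_assoc, mul_left_comm] using h
  have hQ : HasDerivAt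
      (fun t => ∑ i, b i * deriv (fun u => x u i) t * deriv (fun u => x u i) t)
      (∑ i, (b i * dd i * d i + b i * d i * dd i)) s := by
    apply HasDerivAt.fun_sum
    intro i _
    exact ((hX' i).const_mul (b i)).mul (hX' i)
  have hJ := (hP.mul hQ).deriv
  refine Eq.trans hJ ?_
  change (∑ i, 2 * (b i * x s i) * (b i * d i)) * Qs + Ps * ∑ i, (b i * dd i * d i + b i * d i * dd i) = 0
  -- P s ≠ 0
  have hPne : Ps ≠ 0 := by
    intro h0
    have hz : ∀ i ∈ Finset.univ, (b i * x s i)^2 = 0 := by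
      rw [Finset.sum_eq_zero_iff_of_nonneg (fun i _ => sq_nonneg _)] at h0
      exact h0
    have hc := hconstraint s
    rw [Finset.sum_eq_zero] at hc
    · exact one_ne_zero hc.symm
    · intro i _
      have := hz i (Finset.mem_univ i)
      have hbx : b i * x s i = 0 := by
        have := sq_eq_zero_iff.mp this
        exact this
      calc b i * x s i * x s i = (b i * x s i) * x s i := by ring
        _ = 0 := by rw [hbx]; ring
  have hgeo' : ∀ i, dd i = -(Qs / Ps) * (b i * x s i) := fun i => hgeo s i
  have hQ' : (∑ i, (b i * dd i * d i + b i * d i * dd i)) =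
      -(Qs / Ps) * (∑ i, 2 * (b i * x s i) * (b i * d i)) := by
    rw [Finset.mul_sum]
    apply Finset.sum_congr rfl
    intro i _
    rw [hgeo' i]
    ring
  rw [hQ']
  field_simp
  ring
end

section
/- For A = diag(a_0,...,a_n) with distinct diagonal entries and z not equal to any a_k, the function Φ_z(x,y) = (1 + (R_z x, x))(R_z y, y) − (R_z x, y)^2 with R_z = (zI − A)^{-1} admits the partial fraction decomposition Φ_z(x,y) = Σ_{k=0}^n F_k(x,y)/(z − a_k), where F_k(x,y) = y_k^2 + Σ_{j≠k} (x_k y_j − x_j y_k)^2/(a_k − a_j). -/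
/-!
With `w i = 1 / (z - a i)` and `D i j = x i * y j - x j * y i`, a weighted Lagrange identity turns
`Φ_z(x, y) - ∑ y i ^ 2 * w i` into `½ ∑ i j, w i * w j * D i j ^ 2`. For `i ≠ j` the partial
fraction `w i * w j = (w i - w j) / (a i - a j)` then rewrites each term with a coefficient
`D i j ^ 2 / (a i - a j)` that is antisymmetric in `(i, j)`, so the double sum collapses to
`∑ i, w i * ∑ j, D i j ^ 2 / (a i - a j)`.
-/

open Finset

section Sums

variable {ι R : Type*} [Fintype ι] [CommRing R]

theorem two_mul_weighted_lagrange_identity (w u v : ι → R) :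
    2 * ((∑ i, w i * u i ^ 2) * (∑ i, w i * v i ^ 2) - (∑ i, w i * (u i * v i)) ^ 2) =
      ∑ i, ∑ j, w i * w j * (u i * v j - u j * v i) ^ 2 := by
  have hterm : ∀ i j, w i * w j * (u i * v j - u j * v i) ^ 2 =
      (w i * u i ^ 2) * (w j * v j ^ 2) + (w j * u j ^ 2) * (w i * v i ^ 2) -
        2 * ((w i * (u i * v i)) * (w j * (u j * v j))) := fun i j => by ring
  simp only [hterm, sum_add_distrib, sum_sub_distrib]
  rw [sum_comm (f := fun i j => (w j * u j ^ 2) * (w i * v i ^ 2)), sum_mul_sum, sq, sum_mul_sum]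
  simp only [← mul_sum]
  ring

theorem sum_sum_mul_sub_of_antisymm (c : ι → ι → R) (hc : ∀ i j, c j i = -c i j) (w : ι → R) :
    ∑ i, ∑ j, c i j * (w i - w j) = 2 * ∑ i, w i * ∑ j, c i j := by
  have hswap : ∑ i, ∑ j, c i j * w j = -∑ i, ∑ j, c i j * w i := by
    rw [sum_comm, ← sum_neg_distrib]
    refine sum_congr rfl fun j _ => ?_
    rw [← sum_neg_distrib]
    exact sum_congr rfl fun i _ => by rw [hc, neg_mul]
  calc ∑ i, ∑ j, c i j * (w i - w j) = ∑ i, ∑ j, c i j * w i - ∑ i, ∑ j, c i j * w j := by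
        simp only [mul_sub, sum_sub_distrib]
    _ = 2 * ∑ i, ∑ j, c i j * w i := by rw [hswap]; ring
    _ = 2 * ∑ i, w i * ∑ j, c i j := by simp only [← sum_mul, mul_comm (w _)]

theorem sum_sdiff_singleton_div_sub_self [DecidableEq ι] {K : Type*} [DivisionRing K]
    (f a : ι → K) (k : ι) :
    ∑ j ∈ univ \ {k}, f j / (a k - a j) = ∑ j, f j / (a k - a j) :=
  sum_subset (subset_univ _) fun j _ hj => by
    obtain rfl : j = k := by simpa using hj
    rw [sub_self, div_zero]

end Sums

theorem inv_mul_inv_sub_eq_div {K : Type*} [Field K] {z p q : K}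
    (hp : z ≠ p) (hq : z ≠ q) (hpq : p ≠ q) :
    (z - p)⁻¹ * (z - q)⁻¹ = ((z - p)⁻¹ - (z - q)⁻¹) / (p - q) := by
  have := sub_ne_zero.2 hp
  have := sub_ne_zero.2 hq
  have := sub_ne_zero.2 hpq
  field_simp
  ring

/-- Partial fraction decomposition of Moser's function Φ_z(x,y) into the
Uhlenbeck–Devaney integrals F_k. -/
theorem phi_partial_fractions (n : ℕ) (a : Fin (n+1) → ℝ)
    (ha : Function.Injective a) (x y : Fin (n+1) → ℝ)
    (z : ℝ) (hz : ∀ k, z ≠ a k) :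
    (1 + ∑ i, x i * x i / (z - a i)) * (∑ i, y i * y i / (z - a i)) -
      (∑ i, x i * y i / (z - a i))^2 =
    ∑ k, (y k^2 + ∑ j ∈ Finset.univ \ {k}, (x k * y j - x j * y k)^2 / (a k - a j)) /
      (z - a k) := by
  set w : Fin (n+1) → ℝ := fun i => (z - a i)⁻¹
  set D : Fin (n+1) → Fin (n+1) → ℝ := fun i j => x i * y j - x j * y i
  set c : Fin (n+1) → Fin (n+1) → ℝ := fun i j => D i j ^ 2 / (a i - a j)
  have hsum (f : Fin (n+1) → ℝ) : ∑ i, f i / (z - a i) = ∑ i, w i * f i :=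
    sum_congr rfl fun i _ => div_eq_inv_mul _ _
  have hpf (i j) : w i * w j * D i j ^ 2 = c i j * (w i - w j) := by
    rcases eq_or_ne i j with rfl | hij
    · simp [D]
    · rw [inv_mul_inv_sub_eq_div (hz i) (hz j) (ha.ne hij)]
      ring
  have hc (i j) : c j i = -c i j := by
    rw [show c j i = D i j ^ 2 / (a j - a i) by ring, ← neg_sub, div_neg]
  calc (1 + ∑ i, x i * x i / (z - a i)) * (∑ i, y i * y i / (z - a i)) -
        (∑ i, x i * y i / (z - a i)) ^ 2
      = ∑ i, w i * y i ^ 2 + ((∑ i, w i * x i ^ 2) * (∑ i, w i * y i ^ 2) -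
          (∑ i, w i * (x i * y i)) ^ 2) := by
        simp only [hsum, ← sq]
        ring
    _ = ∑ i, w i * y i ^ 2 + (∑ i, ∑ j, w i * w j * D i j ^ 2) / 2 := by
        rw [← two_mul_weighted_lagrange_identity]
        ring
    _ = ∑ i, w i * y i ^ 2 + ∑ i, w i * ∑ j, c i j := by
        simp only [hpf, sum_sum_mul_sub_of_antisymm c hc]
        ring
    _ = _ := by
        simp only [hsum, sum_sdiff_singleton_div_sub_self, mul_add, sum_add_distrib]
        rfl
end

section
/- If (Bx,x) = 1 and (Bx,y) = 0, where B = A^{-1} with A = diag(a_0,...,a_n) having distinct nonzero entries, then Σ_{k=0}^n a_k^{-1} F_k(x,y) = 0, where F_k(x,y) = y_k^2 + Σ_{j≠k}(x_k y_j − x_j y_k)^2/(a_k − a_j). -/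
/-!
Pairing the `(k, j)` and `(j, k)` terms of the double sum, the partial fraction identity
`1 / ((a_k - a_j) a_k) + 1 / ((a_j - a_k) a_j) = -1 / (a_k a_j)` removes the denominators
`a_k - a_j`, and Lagrange's identity with weights `1 / a_k` turns the double sum into
`-((Bx,x)(By,y) - (Bx,y)²) = -(By,y)`, which cancels `∑ y_k² / a_k`.
-/

open Finset

variable {ι K : Type*} [Fintype ι] [Field K]

theorem sum_sum_sq_mul_sub_mul_div_mul (a x y : ι → K) :
    ∑ k, ∑ j, (x k * y j - x j * y k) ^ 2 / (a k * a j)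
      = 2 * ((∑ k, x k * x k / a k) * (∑ k, y k * y k / a k)
        - (∑ k, x k * y k / a k) ^ 2) := by
  have expand : ∀ k j, (x k * y j - x j * y k) ^ 2 / (a k * a j)
      = x k * x k / a k * (y j * y j / a j) + x j * x j / a j * (y k * y k / a k)
        - 2 * (x k * y k / a k * (x j * y j / a j)) := fun k j => by
    simp only [div_eq_mul_inv, mul_inv]; ring
  simp only [expand, sum_add_distrib, sum_sub_distrib, ← mul_sum, ← sum_mul]
  ring

theorem div_sub_div_add_div_sub_div {a b : K} (ha : a ≠ 0) (hb : b ≠ 0) (hab : a ≠ b)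
    (c : K) :
    c / (a - b) / a + c / (b - a) / b = -(c / (a * b)) := by
  have hab' : a - b ≠ 0 := sub_ne_zero.mpr hab
  have hba : b - a ≠ 0 := sub_ne_zero.mpr hab.symm
  field_simp
  ring

theorem sum_sum_sdiff_singleton_swap [DecidableEq ι] {M : Type*} [AddCommMonoid M]
    (g : ι → ι → M) :
    ∑ k, ∑ j ∈ univ \ {k}, g j k = ∑ k, ∑ j ∈ univ \ {k}, g k j :=
  sum_comm' (by simp [eq_comm])

theorem sum_sum_sdiff_singleton_sq_mul_sub_mul_div_sub_div [DecidableEq ι] [NeZero (2 : K)]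
    {a : ι → K} (ha : Function.Injective a) (ha0 : ∀ k, a k ≠ 0) (x y : ι → K) :
    ∑ k, ∑ j ∈ univ \ {k}, (x k * y j - x j * y k) ^ 2 / (a k - a j) / a k
      = -((∑ k, x k * x k / a k) * (∑ k, y k * y k / a k) - (∑ k, x k * y k / a k) ^ 2) := by
  set S := ∑ k, ∑ j ∈ univ \ {k}, (x k * y j - x j * y k) ^ 2 / (a k - a j) / a k
  have pair : ∀ k, ∀ j ∈ univ \ {k}, (x k * y j - x j * y k) ^ 2 / (a k - a j) / a k
      + (x j * y k - x k * y j) ^ 2 / (a j - a k) / a j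
      = -((x k * y j - x j * y k) ^ 2 / (a k * a j)) := fun k j hj => by
    rw [← neg_sq (x j * y k - x k * y j), neg_sub]
    exact div_sub_div_add_div_sub_div (ha0 k) (ha0 j)
      (ha.ne (by simpa [eq_comm] using hj)) _
  have diag : ∀ k, ∑ j ∈ univ \ {k}, (x k * y j - x j * y k) ^ 2 / (a k * a j)
      = ∑ j, (x k * y j - x j * y k) ^ 2 / (a k * a j) := fun k =>
    sum_subset (subset_univ _) fun j _ hj => by simp_all
  refine mul_left_cancel₀ (two_ne_zero (α := K)) ?_
  calc 2 * S = S + ∑ k, ∑ j ∈ univ \ {k}, (x j * y k - x k * y j) ^ 2 / (a j - a k) / a j := by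
        rw [two_mul, sum_sum_sdiff_singleton_swap
          fun k j => (x k * y j - x j * y k) ^ 2 / (a k - a j) / a k]
    _ = -∑ k, ∑ j, (x k * y j - x j * y k) ^ 2 / (a k * a j) := by
        simp only [S, ← sum_add_distrib, ← diag, ← sum_neg_distrib]
        exact sum_congr rfl fun k _ => sum_congr rfl (pair k)
    _ = _ := by rw [sum_sum_sq_mul_sub_mul_div_mul]; ring

/-- If (Bx,x)=1 and (Bx,y)=0 with B = A⁻¹, A = diag(a), then
Σ a_k⁻¹ F_k(x,y) = 0. -/
theorem sum_inv_a_F_eq_zero (n : ℕ) (a : Fin (n+1) → ℝ)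
    (ha : Function.Injective a) (ha0 : ∀ k, a k ≠ 0)
    (x y : Fin (n+1) → ℝ)
    (hx : ∑ k, x k * x k / a k = 1)
    (hxy : ∑ k, x k * y k / a k = 0) :
    ∑ k, (y k^2 + ∑ j ∈ Finset.univ \ {k}, (x k * y j - x j * y k)^2 / (a k - a j)) / a k
      = 0 := by
  simp only [add_div, sum_add_distrib, sum_div]
  rw [sum_sum_sdiff_singleton_sq_mul_sub_mul_div_sub_div ha ha0, hx, hxy]
  simp only [sq]
  ring
end

section
/- Under the conditions (Bx,x)=1 and (Bx,y)=0, the z-derivative of Φ_z(x,y) at z = 0 equals the Joachimsthal quantity: dΦ_z(x,y)/dz |_{z=0} = |Bx|^2 (By,y), and this equals −Σ_{k=0}^n a_k^{-2} F_k(x,y). -/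
/-!
At `z = 0` the resolvent is `R_0 = -B`, so the constraints make `1 + (R_0 x, x)` and `(R_0 x, y)`
vanish; the product rule then leaves only `(R_0' x, x) (R_0 y, y)`, which is `|Bx|² (By, y)`
because `R_z' = -R_z²`.

For the residues, the pair terms of `∑ F_k / a_k²` carry weights `1 / ((a_k - a_j) a_k²)`, and
`1 / ((a_k - a_j) a_k²) + 1 / ((a_j - a_k) a_j²) = -(1 / (a_k a_j²) + 1 / (a_j a_k²))`.
Symmetrizing therefore turns them into a full double sum without the differences `a_k - a_j`,
which expands into products of the quadratic forms `(Bu, v)` and `(B²u, v)`.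
-/

open Finset

section Resolvent

variable {𝕜 : Type*} [NontriviallyNormedField 𝕜] {ι : Type*} [Fintype ι]

/-- `(R_z u, v)` for `R_z = (z - diag a)⁻¹`. -/
def resolventForm (a u v : ι → 𝕜) (z : 𝕜) : 𝕜 :=
  ∑ i, u i * v i / (z - a i)

def phi (a x y : ι → 𝕜) (z : 𝕜) : 𝕜 :=
  (1 + resolventForm a x x z) * resolventForm a y y z - resolventForm a x y z ^ 2

theorem hasDerivAt_resolventForm (a u v : ι → 𝕜) {z : 𝕜} (hz : ∀ i, z ≠ a i) :
    HasDerivAt (resolventForm a u v) (-∑ i, u i * v i / (z - a i) ^ 2) z := by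
  rw [← sum_neg_distrib]
  refine HasDerivAt.fun_sum fun i _ => ?_
  refine ((hasDerivAt_const z (u i * v i)).fun_div ((hasDerivAt_id' z).sub_const (a i))
    (sub_ne_zero.2 (hz i))).congr_deriv ?_
  rw [zero_mul, zero_sub, mul_one, neg_div]

theorem resolventForm_zero (a u v : ι → 𝕜) :
    resolventForm a u v 0 = -∑ i, u i * v i / a i := by
  simp [resolventForm, div_neg]

theorem hasDerivAt_phi_zero {a x y : ι → 𝕜} (ha0 : ∀ i, a i ≠ 0)
    (hx : ∑ i, x i * x i / a i = 1) (hxy : ∑ i, x i * y i / a i = 0) :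
    HasDerivAt (phi a x y) ((∑ i, (x i / a i) ^ 2) * ∑ i, y i * y i / a i) 0 := by
  have h0 : ∀ i, (0 : 𝕜) ≠ a i := fun i => (ha0 i).symm
  have hR := fun u v => hasDerivAt_resolventForm a u v h0
  refine ((((hR x x).const_add 1).mul (hR y y)).sub ((hR x y).pow 2)).congr_deriv ?_
  simp only [resolventForm_zero, hx, hxy, zero_sub, neg_sq, div_pow]
  simp only [sq]
  ring

end Resolvent

section Residues

variable {K : Type*} [Field K] {ι : Type*} [Fintype ι]

theorem sum_sum_div_sub_mul_sq {a : ι → K} {w : ι → ι → K} (ha : Function.Injective a)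
    (ha0 : ∀ k, a k ≠ 0) (hw : ∀ k j, w k j = w j k) (hw0 : ∀ k, w k k = 0) :
    ∑ k, ∑ j, w k j / ((a k - a j) * a k ^ 2) = -∑ k, ∑ j, w k j / (a k * a j ^ 2) := by
  rw [eq_neg_iff_add_eq_zero, ← sum_add_distrib]
  simp_rw [← sum_add_distrib]
  rw [← Fintype.sum_prod_type']
  -- the summand is antisymmetric under `(k, j) ↦ (j, k)` and vanishes on the diagonal
  refine sum_ninvolution Prod.swap (fun ⟨k, j⟩ => ?_) (fun ⟨k, j⟩ hkj => ?_) (by simp) (by simp)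
  · obtain rfl | hkj := eq_or_ne k j
    · simp [hw0]
    have hsub : a k - a j ≠ 0 := sub_ne_zero.2 (ha.ne hkj)
    have hsub' : a j - a k ≠ 0 := sub_ne_zero.2 (ha.ne hkj.symm)
    have := ha0 k
    have := ha0 j
    simp only [Prod.swap, hw j k]
    field_simp
    ring
  · rintro h
    obtain rfl : k = j := (Prod.ext_iff.1 h).2
    simp [hw0] at hkj

theorem sum_sum_sq_cross_div {a : ι → K} (ha0 : ∀ k, a k ≠ 0) (x y : ι → K) :
    ∑ k, ∑ j, (x k * y j - x j * y k) ^ 2 / (a k * a j ^ 2) =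
      (∑ k, x k * x k / a k) * (∑ j, (y j / a j) ^ 2)
        - 2 * (∑ k, x k * y k / a k) * (∑ j, x j * y j / a j ^ 2)
        + (∑ k, y k * y k / a k) * (∑ j, (x j / a j) ^ 2) := by
  rw [mul_assoc, sum_mul_sum, sum_mul_sum, sum_mul_sum, mul_sum, ← sum_sub_distrib,
    ← sum_add_distrib]
  refine sum_congr rfl fun k _ => ?_
  rw [mul_sum, ← sum_sub_distrib, ← sum_add_distrib]
  refine sum_congr rfl fun j _ => ?_
  have := ha0 k
  have := ha0 j
  field_simp
  ring

variable [DecidableEq ι]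

/-- `F_k(x, y)`, the residue of `Φ_z(x, y)` at `z = a k`. -/
def phiResidue (a x y : ι → K) (k : ι) : K :=
  y k ^ 2 + ∑ j ∈ univ \ {k}, (x k * y j - x j * y k) ^ 2 / (a k - a j)

theorem phiResidue_eq_sum (a x y : ι → K) (k : ι) :
    phiResidue a x y k = y k ^ 2 + ∑ j, (x k * y j - x j * y k) ^ 2 / (a k - a j) := by
  rw [phiResidue, sdiff_singleton_eq_erase, sum_erase]
  simp

theorem sum_phiResidue_div_sq {a : ι → K} (ha : Function.Injective a) (ha0 : ∀ k, a k ≠ 0)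
    (x y : ι → K) :
    ∑ k, phiResidue a x y k / a k ^ 2 =
      ∑ k, (y k / a k) ^ 2
        - ((∑ k, x k * x k / a k) * (∑ j, (y j / a j) ^ 2)
          - 2 * (∑ k, x k * y k / a k) * (∑ j, x j * y j / a j ^ 2)
          + (∑ k, y k * y k / a k) * (∑ j, (x j / a j) ^ 2)) := by
  have hsplit : ∀ k, phiResidue a x y k / a k ^ 2 = (y k / a k) ^ 2
      + ∑ j, (x k * y j - x j * y k) ^ 2 / ((a k - a j) * a k ^ 2) := by
    intro k
    simp only [phiResidue_eq_sum, add_div, sum_div, div_div, div_pow]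
  rw [sum_congr rfl fun k _ => hsplit k, sum_add_distrib,
    sum_sum_div_sub_mul_sq ha ha0 (fun k j => by ring) (fun k => by ring),
    sum_sum_sq_cross_div ha0, ← sub_eq_add_neg]

end Residues

/-- Under (Bx,x)=1 and (Bx,y)=0 (B = A⁻¹), the derivative of Φ_z(x,y) at z=0
equals |Bx|²(By,y), which equals −Σ a_k⁻² F_k(x,y). -/
theorem deriv_phi_at_zero (n : ℕ) (a : Fin (n+1) → ℝ)
    (ha : Function.Injective a) (ha0 : ∀ k, a k ≠ 0)
    (x y : Fin (n+1) → ℝ)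
    (hx : ∑ k, x k * x k / a k = 1)
    (hxy : ∑ k, x k * y k / a k = 0) :
    deriv (fun z => (1 + ∑ i, x i * x i / (z - a i)) * (∑ i, y i * y i / (z - a i)) -
        (∑ i, x i * y i / (z - a i))^2) 0 =
      (∑ k, (x k / a k)^2) * (∑ k, y k * y k / a k) ∧
    (∑ k, (x k / a k)^2) * (∑ k, y k * y k / a k) =
      -∑ k, (y k^2 + ∑ j ∈ Finset.univ \ {k}, (x k * y j - x j * y k)^2 / (a k - a j))
        / (a k)^2 := by
  refine ⟨(hasDerivAt_phi_zero ha0 hx hxy).deriv, ?_⟩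
  change _ = -∑ k, phiResidue a x y k / a k ^ 2
  rw [sum_phiResidue_div_sq ha ha0, hx, hxy]
  ring
end

section
/- Along any solution q(t) of the Neumann system q̈ = −Bq + νq on the unit sphere |q|=1, with ν = (Bq,q) − (q̇,q̇), each function F_k(p,q) = q_k^2 + Σ_{j≠k}(p_k q_j − p_j q_k)^2/(b_k − b_j) with p = q̇ is conserved: dF_k/dt = 0. -/
/-- Conservation of the integrals F_k along solutions of the Neumann system
q̈ = −Bq + νq on the unit sphere, ν = (Bq,q) − (q̇,q̇). -/
theorem neumann_integrals_conserved (n : ℕ) (b : Fin (n+1) → ℝ)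
    (hb : Function.Injective b)
    (q : ℝ → Fin (n+1) → ℝ)
    (hsmooth : ∀ i, ContDiff ℝ (⊤ : ℕ∞) (fun t => q t i))
    (hsphere : ∀ t, ∑ i, q t i * q t i = 1)
    (hneumann : ∀ t i, deriv (deriv (fun s => q s i)) t =
      -(b i * q t i) + ((∑ j, b j * q t j * q t j) -
        ∑ j, deriv (fun s => q s j) t * deriv (fun s => q s j) t) * q t i) :
    ∀ (k : Fin (n+1)) (t : ℝ),
      deriv (fun s => q s k ^ 2 + ∑ j ∈ Finset.univ \ {k},
        (deriv (fun u => q u k) s * q s j - deriv (fun u => q u j) s * q s k)^2 /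
          (b k - b j)) t = 0 := by
  intro k t
  set P : Fin (n+1) → ℝ → ℝ := fun i s => deriv (fun u => q u i) s with hPdef
  have hqd : ∀ i, Differentiable ℝ (fun s => q s i) := fun i =>
    (hsmooth i).differentiable (by simp)
  have hPd : ∀ i, Differentiable ℝ (P i) := fun i =>
    ((contDiff_infty_iff_deriv.1 ((hsmooth i).of_le (by simp))).2).differentiable
      (by simp)
  have hq : ∀ i, HasDerivAt (fun s => q s i) (P i t) t := fun i => (hqd i t).hasDerivAt
  have hp : ∀ i, HasDerivAt (P i) (deriv (P i) t) t := fun i => (hPd i t).hasDerivAt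
  -- (p, q) = 0
  have hsum0 : ∑ i, P i t * q t i = 0 := by
    have h1 : HasDerivAt (fun s => ∑ i, q s i * q s i)
        (∑ i : Fin (n+1), (P i t * q t i + q t i * P i t)) t :=
      HasDerivAt.fun_sum (fun i _ => (hq i).mul (hq i))
    have h2 : (fun s => ∑ i, q s i * q s i) = fun _ => (1:ℝ) := funext hsphere
    rw [h2] at h1
    have h3 := h1.unique (hasDerivAt_const t 1)
    have h4 : ∑ i : Fin (n+1), (P i t * q t i + q t i * P i t)
        = 2 * ∑ i, P i t * q t i := by
      rw [Finset.mul_sum]; exact Finset.sum_congr rfl (fun i _ => by ring)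
    rw [h4] at h3
    linarith
  have hkey : ∀ j : Fin (n+1),
      HasDerivAt (fun s => (P k s * q s j - P j s * q s k)^2 / (b k - b j))
        ((↑2 * (P k t * q t j - P j t * q t k) ^ (2-1) *
          ((deriv (P k) t * q t j + P k t * P j t) -
           (deriv (P j) t * q t k + P j t * P k t))) / (b k - b j)) t := by
    intro j
    exact ((((hp k).mul (hq j)).sub ((hp j).mul (hq k))).pow 2).div_const _
  have hF : HasDerivAt (fun s => q s k ^ 2 + ∑ j ∈ Finset.univ \ {k},
        (P k s * q s j - P j s * q s k)^2 / (b k - b j))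
      ((↑2 * q t k ^ (2-1) * P k t) + ∑ j ∈ Finset.univ \ {k},
        (↑2 * (P k t * q t j - P j t * q t k) ^ (2-1) *
          ((deriv (P k) t * q t j + P k t * P j t) -
           (deriv (P j) t * q t k + P j t * P k t))) / (b k - b j)) t :=
    ((hq k).pow 2).add (HasDerivAt.fun_sum (fun j _ => hkey j))
  rw [hF.deriv]
  -- simplify each summand using the Neumann equation
  have hterm : ∀ j ∈ Finset.univ \ ({k} : Finset (Fin (n+1))),
      (↑2 * (P k t * q t j - P j t * q t k) ^ (2-1) *
          ((deriv (P k) t * q t j + P k t * P j t) -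
           (deriv (P j) t * q t k + P j t * P k t))) / (b k - b j)
      = (-2 * q t k * P k t) * (q t j * q t j) + (2 * q t k * q t k) * (P j t * q t j) := by
    intro j hj
    have hjk : j ≠ k := by simpa using (Finset.mem_sdiff.1 hj).2
    have hbne : b k - b j ≠ 0 := sub_ne_zero.2 (fun h => hjk (hb h.symm))
    have e1 : deriv (P k) t = -(b k * q t k) + ((∑ j, b j * q t j * q t j) -
        ∑ j, P j t * P j t) * q t k := hneumann t k
    have e2 : deriv (P j) t = -(b j * q t j) + ((∑ j, b j * q t j * q t j) -
        ∑ j, P j t * P j t) * q t j := hneumann t j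
    rw [e1, e2]
    field_simp
    ring
  rw [Finset.sum_congr rfl hterm]
  have hs1 : ∑ j ∈ Finset.univ \ ({k} : Finset (Fin (n+1))),
      ((-2 * q t k * P k t) * (q t j * q t j) + (2 * q t k * q t k) * (P j t * q t j))
    = (-2 * q t k * P k t) * (∑ j ∈ Finset.univ \ {k}, q t j * q t j)
      + (2 * q t k * q t k) * (∑ j ∈ Finset.univ \ {k}, P j t * q t j) := by
    rw [Finset.sum_add_distrib, Finset.mul_sum, Finset.mul_sum]
  have hs2 : ∑ j ∈ Finset.univ \ ({k} : Finset (Fin (n+1))), q t j * q t j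
      = 1 - q t k * q t k := by
    rw [Finset.sum_sdiff_eq_sub (Finset.subset_univ _), hsphere t, Finset.sum_singleton]
  have hs3 : ∑ j ∈ Finset.univ \ ({k} : Finset (Fin (n+1))), P j t * q t j
      = - (P k t * q t k) := by
    rw [Finset.sum_sdiff_eq_sub (Finset.subset_univ _), hsum0, Finset.sum_singleton]
    ring
  rw [hs1, hs2, hs3]
  ring
end

section
/- The Neumann integrals F_k(p,q) = q_k^2 + Σ_{j≠k}(p_k q_j − p_j q_k)^2/(b_k − b_j) satisfy Σ_{k=0}^n F_k(p,q) = |q|^2 (hence = 1 on the unit sphere), and for |q| = 1 and (p,q) = 0 they satisfy Σ_{k=0}^n b_k F_k(p,q) = (Bq,q) + |p|^2 = 2H. -/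
lemma neumann_sum_sdiff (m : ℕ) (f : Fin m → Fin m → ℝ) (hdiag : ∀ k, f k k = 0) :
    ∑ k, ∑ j ∈ Finset.univ \ {k}, f k j = ∑ k, ∑ j, f k j := by
  refine Finset.sum_congr rfl fun k _ => ?_
  rw [← Finset.sum_sdiff (Finset.subset_univ {k}), Finset.sum_singleton, hdiag, add_zero]

lemma neumann_double_sum_sym (m : ℕ) (f : Fin m → Fin m → ℝ) :
    2 * (∑ k, ∑ j, f k j) = ∑ k, ∑ j, (f k j + f j k) := by
  rw [two_mul]
  nth_rewrite 1 [Finset.sum_comm]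
  rw [← Finset.sum_add_distrib]
  refine Finset.sum_congr rfl fun k _ => ?_
  rw [← Finset.sum_add_distrib]
  exact Finset.sum_congr rfl fun j _ => add_comm _ _

/-- The Neumann integrals satisfy Σ F_k = |q|² and, when |q|=1 and (p,q)=0,
Σ b_k F_k = (Bq,q) + |p|² = 2H. -/
theorem neumann_integrals_relations (n : ℕ) (b : Fin (n+1) → ℝ)
    (hb : Function.Injective b) (p q : Fin (n+1) → ℝ) :
    (∑ k, (q k ^ 2 + ∑ j ∈ Finset.univ \ {k},
        (p k * q j - p j * q k)^2 / (b k - b j)) = ∑ k, q k ^ 2) ∧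
    ((∑ k, q k ^ 2 = 1) → (∑ k, p k * q k = 0) →
      ∑ k, b k * (q k ^ 2 + ∑ j ∈ Finset.univ \ {k},
        (p k * q j - p j * q k)^2 / (b k - b j)) =
      (∑ k, b k * q k * q k) + ∑ k, p k ^ 2) := by
  constructor
  · rw [Finset.sum_add_distrib]
    have h0 : ∑ k : Fin (n+1), ∑ j ∈ Finset.univ \ {k},
        (p k * q j - p j * q k)^2 / (b k - b j) = 0 := by
      rw [neumann_sum_sdiff n.succ (fun k j => (p k * q j - p j * q k)^2 / (b k - b j))
        (fun k => by simp)]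
      have h2 : 2 * (∑ k : Fin (n+1), ∑ j, (p k * q j - p j * q k)^2 / (b k - b j)) = 0 := by
        rw [neumann_double_sum_sym]
        refine Finset.sum_eq_zero fun k _ => Finset.sum_eq_zero fun j _ => ?_
        rw [show b j - b k = -(b k - b j) by ring, div_neg,
          show (p j * q k - p k * q j)^2 = (p k * q j - p j * q k)^2 by ring]
        ring
      linarith
    rw [h0, add_zero]
  · intro hq ho
    have hA : ∑ k : Fin (n+1), ∑ j, (p k * q j - p j * q k)^2 = 2 * ∑ k, p k ^ 2 := by
      have inner : ∀ k : Fin (n+1), ∑ j, (p k * q j - p j * q k)^2 =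
          p k ^ 2 * (∑ j, q j ^ 2) - 2 * (p k * q k) * (∑ j, p j * q j)
            + q k ^ 2 * (∑ j, p j ^ 2) := by
        intro k
        rw [Finset.mul_sum, Finset.mul_sum, Finset.mul_sum, ← Finset.sum_sub_distrib,
          ← Finset.sum_add_distrib]
        exact Finset.sum_congr rfl fun j _ => by ring
      calc ∑ k : Fin (n+1), ∑ j, (p k * q j - p j * q k)^2
          = ∑ k : Fin (n+1), (p k ^ 2 * 1 - 2 * (p k * q k) * 0 + q k ^ 2 * (∑ j, p j ^ 2)) := by
            refine Finset.sum_congr rfl fun k _ => ?_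
            rw [inner k, hq, ho]
        _ = (∑ k, p k ^ 2) + (∑ k, q k ^ 2) * (∑ j, p j ^ 2) := by
            rw [Finset.sum_mul, ← Finset.sum_add_distrib]
            exact Finset.sum_congr rfl fun k _ => by ring
        _ = 2 * ∑ k, p k ^ 2 := by rw [hq]; ring
    have hS2 : ∑ k : Fin (n+1), ∑ j ∈ Finset.univ \ {k},
        b k * ((p k * q j - p j * q k)^2 / (b k - b j)) = ∑ k, p k ^ 2 := by
      rw [neumann_sum_sdiff n.succ (fun k j => b k * ((p k * q j - p j * q k)^2 / (b k - b j)))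
        (fun k => by simp)]
      have h2 : 2 * (∑ k : Fin (n+1), ∑ j, b k * ((p k * q j - p j * q k)^2 / (b k - b j)))
          = 2 * ∑ k, p k ^ 2 := by
        rw [neumann_double_sum_sym, ← hA]
        refine Finset.sum_congr rfl fun k _ => Finset.sum_congr rfl fun j _ => ?_
        by_cases hkj : k = j
        · subst hkj; simp
        · have hne : b k - b j ≠ 0 := sub_ne_zero.mpr (fun h => hkj (hb h))
          have hne' : b j - b k ≠ 0 := sub_ne_zero.mpr (fun h => hkj (hb h.symm))
          field_simp
          ring
      linarith
    calc ∑ k : Fin (n+1), b k * (q k ^ 2 + ∑ j ∈ Finset.univ \ {k},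
          (p k * q j - p j * q k)^2 / (b k - b j))
        = ∑ k : Fin (n+1), (b k * q k * q k + ∑ j ∈ Finset.univ \ {k},
            b k * ((p k * q j - p j * q k)^2 / (b k - b j))) := by
          refine Finset.sum_congr rfl fun k _ => ?_
          rw [mul_add, Finset.mul_sum, show b k * q k ^ 2 = b k * q k * q k by ring]
      _ = (∑ k, b k * q k * q k) + ∑ k, p k ^ 2 := by
          rw [Finset.sum_add_distrib, hS2]
end

section
/- The spherical elliptic coordinate system is orthogonal: if q_i(u_1,...,u_n) satisfy q_i^2 = ∏_j (b_i − u_j)/∏_{k≠i}(b_i − b_k), then for i ≠ j the metric coefficient g_{ij} = (1/4) Σ_{k=0}^n q_k^2 / ((u_i − b_k)(u_j − b_k)) vanishes, and g_{jj} = −U'(u_j)/(4B(u_j)) where U(u) = ∏_{m=1}^n (u − u_m) and B(u) = ∏_{k=0}^n (u − b_k). -/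
/-!
Both identities are statements about Lagrange interpolation at the nodes `b₀, …, bₙ`.
Dividing `q_k² = U(b_k) / B'(b_k)` by `(u_i - b_k)(u_j - b_k)` cancels two linear factors of `U`,
leaving `P(b_k) / B'(b_k)` for a polynomial `P` of degree `n - 2`; the sum of these is the
coefficient of `Xⁿ` in the interpolant of `P`, which is `P` itself, so it vanishes. On the
diagonal one factor is left over, and the sum is the partial fraction expansion of
`P(x) / B(x)` at `x = u_j` with `P = U / (X - u_j)`, whose value at `u_j` is `U'(u_j)`.
-/

open Finset Polynomial

namespace Lagrange

variable {F : Type*} [Field F] {ι : Type*} [DecidableEq ι] {s : Finset ι} {v : ι → F}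
  {P : F[X]}

theorem sum_eval_div_prod_sub_eq_zero (hvs : Set.InjOn v s) (hP : P.degree < ↑(#s - 1)) :
    ∑ i ∈ s, P.eval (v i) / ∏ j ∈ s.erase i, (v i - v j) = 0 := by
  rw [← coeff_eq_sum hvs (hP.trans_le (by exact_mod_cast Nat.sub_le _ _)),
    coeff_eq_zero_of_degree_lt hP]

theorem sum_eval_div_prod_sub_div_sub (hvs : Set.InjOn v s) (hP : P.degree < #s) {x : F}
    (hx : ∀ i ∈ s, x ≠ v i) :
    ∑ i ∈ s, P.eval (v i) / (∏ j ∈ s.erase i, (v i - v j)) / (x - v i) =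
      P.eval x / ∏ i ∈ s, (x - v i) := by
  have hB : ∏ i ∈ s, (x - v i) ≠ 0 := prod_ne_zero_iff.2 fun i hi => sub_ne_zero.2 (hx i hi)
  conv_rhs => rw [eq_interpolate hvs hP, eval_interpolate_not_at_node _ hx, eval_nodal,
    mul_div_cancel_left₀ _ hB]
  refine sum_congr rfl fun i _ => ?_
  rw [nodalWeight, prod_inv_distrib]
  simp only [div_eq_mul_inv]
  ac_rfl

end Lagrange

section

variable {F : Type*} [Field F] {ι : Type*} [Fintype ι] [DecidableEq ι] (u : ι → F) {x : F}

theorem prod_sub_div_mul_eq_prod_sdiff {i j : ι} (hij : i ≠ j) (hi : u i ≠ x)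
    (hj : u j ≠ x) :
    (∏ m, (x - u m)) / ((u i - x) * (u j - x)) = ∏ m ∈ univ \ {i, j}, (x - u m) := by
  have hi' : x - u i ≠ 0 := sub_ne_zero.2 hi.symm
  have hj' : x - u j ≠ 0 := sub_ne_zero.2 hj.symm
  rw [← prod_sdiff (subset_univ {i, j}), prod_pair hij]
  field_simp
  ring

theorem prod_sub_div_sq_eq_neg_prod_erase_div {j : ι} (hj : u j ≠ x) :
    (∏ m, (x - u m)) / (u j - x) ^ 2 = -((∏ m ∈ univ.erase j, (x - u m)) / (u j - x)) := by
  have hj' : u j - x ≠ 0 := sub_ne_zero.2 hj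
  rw [← mul_prod_erase univ _ (mem_univ j)]
  field_simp
  ring

end

theorem Fin.apply_ne_of_lt_of_lt_succ {α : Type*} [Preorder α] {n : ℕ} {b : Fin (n + 1) → α}
    (hb : Monotone b) {j : Fin n} {x : α} (h₁ : b j.castSucc < x) (h₂ : x < b j.succ)
    (k : Fin (n + 1)) : x ≠ b k := by
  rcases le_or_gt k j.castSucc with hk | hk
  · exact ((hb hk).trans_lt h₁).ne'
  · exact (h₂.trans_le (hb (Fin.castSucc_lt_iff_succ_le.1 hk))).ne

theorem deriv_prod_sub_apply {𝕜 ι : Type*} [NontriviallyNormedField 𝕜] [Fintype ι]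
    [DecidableEq ι] (u : ι → 𝕜) (j : ι) :
    deriv (fun t => ∏ m, (t - u m)) (u j) = ∏ m ∈ univ.erase j, (u j - u m) := by
  have hU : (fun t => ∏ m, (t - u m)) = fun t => (Lagrange.nodal univ u).eval t := by
    funext t
    rw [Lagrange.eval_nodal]
  rw [hU, Polynomial.deriv, Lagrange.eval_nodal_derivative_eval_node_eq (mem_univ j),
    Lagrange.eval_nodal]

section

variable {F : Type*} [Field F] {ι κ : Type*} [Fintype ι] [DecidableEq ι] [Fintype κ]
  [DecidableEq κ] {b : κ → F} {u : ι → F}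

theorem sum_prod_sub_div_prod_sub_div_mul_eq_zero (hb : Function.Injective b)
    (hcard : Fintype.card ι ≤ Fintype.card κ) {i j : ι} (hij : i ≠ j)
    (hi : ∀ k, u i ≠ b k) (hj : ∀ k, u j ≠ b k) :
    ∑ k, (∏ m, (b k - u m)) / (∏ l ∈ univ \ {k}, (b k - b l)) /
      ((u i - b k) * (u j - b k)) = 0 := by
  have hpair : 2 ≤ Fintype.card ι := by simpa [card_pair hij] using card_le_univ {i, j}
  have hP : (Lagrange.nodal (univ \ {i, j}) u).degree < ↑(#(univ : Finset κ) - 1) := by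
    rw [Lagrange.degree_nodal, card_sdiff_of_subset (subset_univ _), card_pair hij]
    simp only [card_univ, Nat.cast_lt]
    omega
  rw [← Lagrange.sum_eval_div_prod_sub_eq_zero hb.injOn hP]
  refine sum_congr rfl fun k _ => ?_
  rw [div_right_comm, prod_sub_div_mul_eq_prod_sdiff u hij (hi k) (hj k), Lagrange.eval_nodal,
    sdiff_singleton_eq_erase]

theorem sum_prod_sub_div_prod_sub_div_sq (hb : Function.Injective b)
    (hcard : Fintype.card ι ≤ Fintype.card κ) {j : ι} (hj : ∀ k, u j ≠ b k) :
    ∑ k, (∏ m, (b k - u m)) / (∏ l ∈ univ \ {k}, (b k - b l)) / (u j - b k) ^ 2 =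
      -(∏ m ∈ univ.erase j, (u j - u m)) / ∏ k, (u j - b k) := by
  have hpos : 0 < Fintype.card ι := Fintype.card_pos_iff.2 ⟨j⟩
  have hP : (Lagrange.nodal (univ.erase j) u).degree < #(univ : Finset κ) := by
    rw [Lagrange.degree_nodal, card_erase_of_mem (mem_univ j)]
    simp only [card_univ, Nat.cast_lt]
    omega
  have hsum := Lagrange.sum_eval_div_prod_sub_div_sub hb.injOn hP fun k _ => hj k
  simp only [Lagrange.eval_nodal] at hsum
  rw [neg_div, ← hsum, ← sum_neg_distrib]
  refine sum_congr rfl fun k _ => ?_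
  rw [div_right_comm, prod_sub_div_sq_eq_neg_prod_erase_div u (hj k), neg_div, div_right_comm,
    sdiff_singleton_eq_erase]

end

theorem elliptic_coordinates_orthogonal_general (n : ℕ) (b : Fin (n+1) → ℝ)
    (u : Fin n → ℝ)
    (hinter : ∀ j : Fin n, b j.castSucc < u j ∧ u j < b j.succ) :
    (∀ i j : Fin n, i ≠ j →
      (1/4) * ∑ k, ((∏ m, (b k - u m)) / (∏ l ∈ Finset.univ \ {k}, (b k - b l))) /
        ((u i - b k) * (u j - b k)) = 0) ∧
    (∀ j : Fin n,
      (1/4) * ∑ k, ((∏ m, (b k - u m)) / (∏ l ∈ Finset.univ \ {k}, (b k - b l))) /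
        ((u j - b k)^2) =
      -(deriv (fun t => ∏ m, (t - u m)) (u j)) / (4 * ∏ k, (u j - b k))) := by
  have hb : StrictMono b :=
    Fin.strictMono_iff_lt_succ.2 fun j => (hinter j).1.trans (hinter j).2
  have hub (j : Fin n) (k : Fin (n + 1)) : u j ≠ b k :=
    Fin.apply_ne_of_lt_of_lt_succ hb.monotone (hinter j).1 (hinter j).2 k
  have hcard : Fintype.card (Fin n) ≤ Fintype.card (Fin (n + 1)) := by simp
  refine ⟨fun i j hij => ?_, fun j => ?_⟩
  · rw [sum_prod_sub_div_prod_sub_div_mul_eq_zero hb.injective hcard hij (hub i) (hub j),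
      mul_zero]
  · rw [sum_prod_sub_div_prod_sub_div_sq hb.injective hcard (hub j), deriv_prod_sub_apply]
    ring

/-- Orthogonality of the spherical elliptic coordinate system: the
off-diagonal metric coefficients g_{ij} vanish, and
g_{jj} = −U'(u_j)/(4B(u_j)). -/
theorem elliptic_coordinates_orthogonal (n : ℕ) (b : Fin (n+1) → ℝ)
    (u : Fin n → ℝ) (hmono : StrictMono b)
    (hinter : ∀ j : Fin n, b j.castSucc < u j ∧ u j < b j.succ) :
    (∀ i j : Fin n, i ≠ j →
      (1/4) * ∑ k, ((∏ m, (b k - u m)) / (∏ l ∈ Finset.univ \ {k}, (b k - b l))) /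
        ((u i - b k) * (u j - b k)) = 0) ∧
    (∀ j : Fin n,
      (1/4) * ∑ k, ((∏ m, (b k - u m)) / (∏ l ∈ Finset.univ \ {k}, (b k - b l))) /
        ((u j - b k)^2) =
      -(deriv (fun t => ∏ m, (t - u m)) (u j)) / (4 * ∏ k, (u j - b k))) :=
  elliptic_coordinates_orthogonal_general n b u hinter
end

section
/- Kn\u00f6rrer's theorem: Let x(τ) solve the reparametrized geodesic equation ẍ + (α̇/α) ẋ = −ε B x on the quadric (Bx,x)=1, where α^2 |Bx|^4 = |J| is constant, ε = sign(J) ∈ {±1}, and J ≠ 0. Then q = Bx/|Bx| satisfies the Neumann equation q̈ = −εBq + μq on the unit sphere, with μ = ε(Bq,q) − (q̇,q̇). -/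
set_option maxHeartbeats 1600000


/-- Knörrer's theorem: if x(τ) solves the reparametrized geodesic equation
ẍ + (α̇/α)ẋ = −εBx on (Bx,x)=1, with α²|Bx|⁴ = |J| constant, J ≠ 0,
ε = J/|J|, then q = Bx/|Bx| solves the Neumann system
q̈ = −εBq + μq, μ = ε(Bq,q) − (q̇,q̇), on the unit sphere. -/
theorem knorrer_map (n : ℕ) (b : Fin (n+1) → ℝ) (hb : ∀ i, b i ≠ 0)
    (x : ℝ → Fin (n+1) → ℝ) (α : ℝ → ℝ) (J ε : ℝ)
    (hxsmooth : ∀ i, ContDiff ℝ (⊤ : ℕ∞) (fun τ => x τ i))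
    (hαsmooth : ContDiff ℝ (⊤ : ℕ∞) α) (hαpos : ∀ τ, 0 < α τ)
    (hconstraint : ∀ τ, ∑ i, b i * x τ i * x τ i = 1)
    (hBx : ∀ τ, (fun i => b i * x τ i) ≠ 0)
    (hJ : J ≠ 0) (hε : ε = J / |J|)
    (hα : ∀ τ, (α τ)^2 * (∑ i, (b i * x τ i)^2)^2 = |J|)
    (hgeo : ∀ τ i, deriv (deriv (fun t => x t i)) τ +
      (deriv α τ / α τ) * deriv (fun t => x t i) τ = -(ε * (b i * x τ i)))
    (q : ℝ → Fin (n+1) → ℝ)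
    (hq : ∀ τ i, q τ i = b i * x τ i / Real.sqrt (∑ j, (b j * x τ j)^2)) :
    ∀ τ i, deriv (deriv (fun t => q t i)) τ =
      -(ε * (b i * q τ i)) +
        (ε * (∑ j, b j * q τ j * q τ j) -
          ∑ j, deriv (fun t => q t j) τ * deriv (fun t => q t j) τ) * q τ i := by
  classical
  have hxdiff : ∀ i, Differentiable ℝ (fun t => x t i) :=
    fun i => (hxsmooth i).differentiable (by simp)
  have hxsm' : ∀ i, ContDiff ℝ ((⊤ : ℕ∞) : WithTop ℕ∞) (fun t => x t i) := fun i => (hxsmooth i).of_le (by simp)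
  have hxdsm : ∀ i, ContDiff ℝ ((⊤ : ℕ∞) : WithTop ℕ∞) (deriv (fun t => x t i)) :=
    fun i => (contDiff_infty_iff_deriv.mp (hxsm' i)).2
  have hxddiff : ∀ i, Differentiable ℝ (deriv (fun t => x t i)) :=
    fun i => (hxdsm i).differentiable (by simp)
  set S : ℝ → ℝ := fun t => ∑ j, (b j * x t j)^2 with hS_def
  have hSpos : ∀ t, 0 < S t := by
    intro t
    obtain ⟨j, hj⟩ := Function.ne_iff.mp (hBx t)
    simp only [Pi.zero_apply] at hj
    exact Finset.sum_pos' (fun k _ => sq_nonneg _) ⟨j, Finset.mem_univ j, by positivity⟩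
  set Sd : ℝ → ℝ := fun t => ∑ j, 2 * (b j * x t j) * (b j * deriv (fun s => x s j) t)
    with hSd_def
  have hS' : ∀ t, HasDerivAt S (Sd t) t := by
    intro t
    simp only [hS_def, hSd_def]
    apply HasDerivAt.fun_sum
    intro j _
    have h1 : HasDerivAt (fun s => b j * x s j) (b j * deriv (fun s => x s j) t) t :=
      ((hxdiff j) t).hasDerivAt.const_mul (b j)
    simpa using h1.fun_pow 2
  have hSdsm : ContDiff ℝ ((⊤ : ℕ∞) : WithTop ℕ∞) Sd := by
    rw [hSd_def]
    apply ContDiff.sum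
    intro j _
    exact (contDiff_const.mul (contDiff_const.mul (hxsm' j))).mul
      (contDiff_const.mul (hxdsm j))
  have hSddiff : Differentiable ℝ Sd := hSdsm.differentiable (by simp)
  have hSd' : ∀ t, HasDerivAt Sd
      (∑ j, (2 * (b j * deriv (fun s => x s j) t) * (b j * deriv (fun s => x s j) t)
        + 2 * (b j * x t j) * (b j * deriv (deriv (fun s => x s j)) t))) t := by
    intro t
    simp only [hSd_def]
    apply HasDerivAt.fun_sum
    intro j _
    have h1 : HasDerivAt (fun s => 2 * (b j * x s j)) (2 * (b j * deriv (fun s => x s j) t)) t :=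
      (((hxdiff j) t).hasDerivAt.const_mul (b j)).const_mul 2
    have h2 : HasDerivAt (fun s => b j * deriv (fun s' => x s' j) s)
        (b j * deriv (deriv (fun s => x s j)) t) t :=
      ((hxddiff j) t).hasDerivAt.const_mul (b j)
    exact h1.mul h2
  set r : ℝ → ℝ := fun t => Real.sqrt (S t) with hr_def
  have hrpos : ∀ t, 0 < r t := fun t => Real.sqrt_pos.mpr (hSpos t)
  have hr2 : ∀ t, r t ^ 2 = S t := fun t => Real.sq_sqrt (hSpos t).le
  set c : ℝ → ℝ := fun t => 1 / (2 * r t) * Sd t with hc_def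
  have hr' : ∀ t, HasDerivAt r (c t) t := by
    intro t
    have h := (Real.hasDerivAt_sqrt (hSpos t).ne').comp t (hS' t)
    simpa [hr_def, hc_def, Function.comp_def] using h
  have hc' : ∀ t, HasDerivAt c ((0 * (2 * r t) - 1 * (2 * c t)) / (2 * r t) ^ 2 * Sd t
      + 1 / (2 * r t) *
        (∑ j, (2 * (b j * deriv (fun s => x s j) t) * (b j * deriv (fun s => x s j) t)
          + 2 * (b j * x t j) * (b j * deriv (deriv (fun s => x s j)) t)))) t := by
    intro t
    exact ((hasDerivAt_const t (1:ℝ)).div ((hr' t).const_mul 2)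
      (mul_pos two_pos (hrpos t)).ne').mul (hSd' t)
  have hsqrt : ∀ t, Real.sqrt (∑ j, (b j * x t j)^2) = r t := fun t => by
    simp only [hr_def, hS_def]
  have hq' : ∀ i t, HasDerivAt (fun s => q s i)
      ((b i * deriv (fun s => x s i) t * r t - b i * x t i * c t) / r t ^ 2) t := by
    intro i t
    have hfun : (fun s => q s i) = fun s => (b i * x s i) / r s := by
      funext s; rw [hq s i, hsqrt s]
    rw [hfun]
    exact (((hxdiff i) t).hasDerivAt.const_mul (b i)).div (hr' t) (hrpos t).ne'
  have hderivq : ∀ i, deriv (fun s => q s i)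
      = fun t => (b i * deriv (fun s => x s i) t * r t - b i * x t i * c t) / r t ^ 2 :=
    fun i => funext fun t => (hq' i t).deriv
  have hαdiff : Differentiable ℝ α := hαsmooth.differentiable (by simp)
  have hαrel : ∀ t, deriv α t * S t + α t * Sd t = 0 := by
    intro t
    have hF : HasDerivAt (fun s => (α s)^2 * (S s)^2)
        (2 * α t ^ 1 * deriv α t * S t ^ 2 + α t ^ 2 * (2 * S t ^ 1 * Sd t)) t :=
      ((hαdiff t).hasDerivAt.pow 2).mul ((hS' t).pow 2)
    have hFc : (fun s => (α s)^2 * (S s)^2) = fun _ => |J| := by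
      funext s; exact hα s
    have h0 : deriv (fun s => (α s)^2 * (S s)^2) t = 0 := by
      rw [hFc]; exact deriv_const t _
    have h1 : 2 * α t ^ 1 * deriv α t * S t ^ 2 + α t ^ 2 * (2 * S t ^ 1 * Sd t) = 0 := by
      rw [← hF.deriv]; exact h0
    have h2 : (2 * α t * S t) * (deriv α t * S t + α t * Sd t) = 0 := by linear_combination h1
    rcases mul_eq_zero.mp h2 with h | h
    · exact absurd h (mul_pos (mul_pos two_pos (hαpos t)) (hSpos t)).ne'
    · exact h
  have hxdd : ∀ t j, deriv (deriv (fun s => x s j)) t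
      = Sd t / S t * deriv (fun s => x s j) t - ε * (b j * x t j) := by
    intro t j
    have hg := hgeo t j
    have hfrac : deriv α t / α t = -(Sd t / S t) := by
      rw [div_eq_iff (hαpos t).ne']
      have h := hαrel t
      field_simp [(hSpos t).ne']
      linear_combination h
    have hstep : deriv (deriv (fun s => x s j)) t
        = -(ε * (b j * x t j)) - deriv α t / α t * deriv (fun s => x s j) t := by
      linarith [hg]
    rw [hstep, hfrac]; ring
  intro τ i
  have hRne : r τ ≠ 0 := (hrpos τ).ne'
  have hSτ : S τ = ∑ j, (b j * x τ j)^2 := by rw [hS_def]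
  have hSdτ : Sd τ = ∑ j, 2 * (b j * x τ j) * (b j * deriv (fun s => x s j) τ) := by
    rw [hSd_def]
  -- second derivative of q_i
  have hA : HasDerivAt (fun t => b i * deriv (fun s => x s i) t)
      (b i * deriv (deriv (fun s => x s i)) τ) τ :=
    ((hxddiff i) τ).hasDerivAt.const_mul (b i)
  have hB : HasDerivAt (fun t => b i * x t i) (b i * deriv (fun s => x s i) τ) τ :=
    ((hxdiff i) τ).hasDerivAt.const_mul (b i)
  have hnum := (hA.fun_mul (hr' τ)).fun_sub (hB.fun_mul (hc' τ))
  have hden := (hr' τ).fun_pow 2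
  have hQDd := (hnum.fun_div hden (pow_ne_zero 2 hRne)).deriv
  -- sums
  have hsumB : (∑ j, b j * q τ j * q τ j)
      = (∑ j, b j * (b j * x τ j) * (b j * x τ j)) * (1 / r τ ^ 2) := by
    rw [Finset.sum_mul]
    refine Finset.sum_congr rfl fun j _ => ?_
    rw [hq τ j, hsqrt τ]
    field_simp
    try ring
    try tauto
  have hsumQ : (∑ j, deriv (fun t => q t j) τ * deriv (fun t => q t j) τ)
      = (∑ j, (b j * deriv (fun s => x s j) τ) * (b j * deriv (fun s => x s j) τ)) * (1 / r τ ^ 2)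
        - Sd τ * (c τ / r τ ^ 3) + S τ * (c τ ^ 2 / r τ ^ 4) := by
    have h1 : ∀ j, deriv (fun t => q t j) τ * deriv (fun t => q t j) τ
        = (b j * deriv (fun s => x s j) τ) * (b j * deriv (fun s => x s j) τ) * (1 / r τ ^ 2)
          - 2 * (b j * x τ j) * (b j * deriv (fun s => x s j) τ) * (c τ / r τ ^ 3)
          + (b j * x τ j) ^ 2 * (c τ ^ 2 / r τ ^ 4) := by
      intro j
      rw [hderivq j]
      field_simp
      ring
    rw [Finset.sum_congr rfl fun j _ => h1 j]
    rw [Finset.sum_add_distrib, Finset.sum_sub_distrib,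
      ← Finset.sum_mul, ← Finset.sum_mul, ← Finset.sum_mul, ← hSdτ, ← hSτ]
  have hSDD : (∑ j, (2 * (b j * deriv (fun s => x s j) τ) * (b j * deriv (fun s => x s j) τ)
        + 2 * (b j * x τ j) * (b j * deriv (deriv (fun s => x s j)) τ)))
      = 2 * (∑ j, (b j * deriv (fun s => x s j) τ) * (b j * deriv (fun s => x s j) τ))
        + Sd τ / S τ * Sd τ
        - 2 * ε * (∑ j, b j * (b j * x τ j) * (b j * x τ j)) := by
    have h1 : ∀ j, (2 * (b j * deriv (fun s => x s j) τ) * (b j * deriv (fun s => x s j) τ)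
          + 2 * (b j * x τ j) * (b j * deriv (deriv (fun s => x s j)) τ))
        = 2 * ((b j * deriv (fun s => x s j) τ) * (b j * deriv (fun s => x s j) τ))
          + Sd τ / S τ * (2 * (b j * x τ j) * (b j * deriv (fun s => x s j) τ))
          - 2 * ε * (b j * (b j * x τ j) * (b j * x τ j)) := by
      intro j
      rw [hxdd τ j]
      ring
    rw [Finset.sum_congr rfl fun j _ => h1 j]
    rw [Finset.sum_sub_distrib, Finset.sum_add_distrib,
      ← Finset.mul_sum, ← Finset.mul_sum, ← Finset.mul_sum, ← hSdτ]
  -- rewrite the goal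
  rw [hderivq i, hQDd, hq τ i, hsqrt τ, hsumB, hsumQ, hSDD, hxdd τ i]
  have hc2 : c τ = 1 / (2 * r τ) * Sd τ := by rw [hc_def]
  rw [hc2, ← hr2 τ]
  field_simp
  ring
end

section
/- On the symmetric hyperboloid with metric ds² = ((c²+b²ρ²)/(1+ρ²))dρ² + a²(1+ρ²)dφ², the Joachimsthal integral of an arclength geodesic equals J = (1/(a⁴c²))((b²/a²)I² − 2a²H), where I = a²(1+ρ²)φ̇ and 2H = 1 in arclength parametrization, b² = a² + c². -/
lemma joach_key (a c b p p' q' : ℝ) (ha : a ≠ 0) (hc : c ≠ 0) (hb : b^2 = a^2+c^2)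
    (harc : c^2*p'^2 + a^2*p^2*p'^2/(1+p^2) + a^2*(1+p^2)*q'^2 = 1) :
    (p^2/c^2 + (1+p^2)/a^2) * (-(p'^2) + p^2*p'^2/(1+p^2) + (1+p^2)*q'^2)
      = (1/(a^4*c^2)) * ((b^2/a^2)*(a^2*(1+p^2)*q')^2 - a^2) := by
  have h1 : (1:ℝ)+p^2 ≠ 0 := by positivity
  rw [hb]
  field_simp at harc ⊢
  linear_combination (-1) * harc

/-- On the symmetric hyperboloid, the Joachimsthal integral of an arclength
geodesic equals J = (1/(a⁴c²))((b²/a²)I² − 2a²H), with 2H = 1. -/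
theorem joachimsthal_symmetric_case (a c : ℝ) (ha : 0 < a) (hc : 0 < c)
    (b : ℝ) (hb : b^2 = a^2 + c^2)
    (ρ φ : ℝ → ℝ) (hρ : ContDiff ℝ (⊤ : ℕ∞) ρ) (hφ : ContDiff ℝ (⊤ : ℕ∞) φ)
    (x : ℝ → Fin 3 → ℝ)
    (hx0 : ∀ t, x t 0 = c * ρ t)
    (hx1 : ∀ t, x t 1 = a * Real.sqrt (1 + (ρ t)^2) * Real.cos (φ t))
    (hx2 : ∀ t, x t 2 = a * Real.sqrt (1 + (ρ t)^2) * Real.sin (φ t))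
    (B : Fin 3 → ℝ) (hB : B = ![-(1/c^2), 1/a^2, 1/a^2])
    (harclength : ∀ t, ∑ i, (deriv (fun s => x s i) t)^2 = 1)
    (J I : ℝ → ℝ)
    (hJ : ∀ t, J t = (∑ i, (B i * x t i)^2) *
      (∑ i, B i * (deriv (fun s => x s i) t)^2))
    (hI : ∀ t, I t = a^2 * (1 + (ρ t)^2) * deriv φ t)
    (H : ℝ) (hH : H = 1/2) :
    ∀ t, J t = (1/(a^4 * c^2)) * ((b^2 / a^2) * (I t)^2 - 2 * a^2 * H) := by
  intro t
  have hρd : HasDerivAt ρ (deriv ρ t) t := (hρ.differentiable (by simp) t).hasDerivAt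
  have hφd : HasDerivAt φ (deriv φ t) t := (hφ.differentiable (by simp) t).hasDerivAt
  set p := ρ t with hp
  set p' := deriv ρ t with hp'
  set q' := deriv φ t with hq'
  have hpos : (0:ℝ) < 1 + p^2 := by positivity
  set s := Real.sqrt (1 + p^2) with hsdef
  have hspos : 0 < s := Real.sqrt_pos.mpr hpos
  have hsne : s ≠ 0 := hspos.ne'
  have hs2 : s^2 = 1 + p^2 := Real.sq_sqrt hpos.le
  set C := Real.cos (φ t) with hC
  set S := Real.sin (φ t) with hS
  have hCS : S^2 + C^2 = 1 := Real.sin_sq_add_cos_sq (φ t)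
  -- derivative of inner function 1 + ρ²
  have hin : HasDerivAt (fun u => 1 + ρ u ^ 2) (0 + ↑2 * ρ t ^ (2-1) * deriv ρ t) t :=
    (hasDerivAt_const t (1:ℝ)).add (hρd.pow 2)
  have hg : HasDerivAt (fun u => Real.sqrt (1 + ρ u ^ 2))
      ((0 + ↑2 * ρ t ^ (2-1) * deriv ρ t) / (2 * Real.sqrt (1 + ρ t ^ 2))) t :=
    hin.sqrt hpos.ne'
  have hgval : (0 + ↑2 * ρ t ^ (2-1) * deriv ρ t) / (2 * Real.sqrt (1 + ρ t ^ 2))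
      = p * p' / s := by
    rw [← hsdef]; field_simp; ring
  rw [hgval] at hg
  -- derivatives of the components
  have e0 : (fun u => x u 0) = fun u => c * ρ u := funext hx0
  have e1 : (fun u => x u 1) = fun u => a * Real.sqrt (1 + ρ u ^ 2) * Real.cos (φ u) := by
    funext u; exact hx1 u
  have e2 : (fun u => x u 2) = fun u => a * Real.sqrt (1 + ρ u ^ 2) * Real.sin (φ u) := by
    funext u; exact hx2 u
  have d0 : deriv (fun u => x u 0) t = c * p' := by
    rw [e0]; exact (hρd.const_mul c).deriv
  have d1 : deriv (fun u => x u 1) t = (a * (p * p' / s)) * C + (a * s) * (-S * q') := by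
    rw [e1]; exact ((hg.const_mul a).mul hφd.cos).deriv
  have d2 : deriv (fun u => x u 2) t = (a * (p * p' / s)) * S + (a * s) * (C * q') := by
    rw [e2]; exact ((hg.const_mul a).mul hφd.sin).deriv
  -- squared sums
  have hsum12 : (deriv (fun u => x u 1) t)^2 + (deriv (fun u => x u 2) t)^2
      = a^2*p^2*p'^2/(1+p^2) + a^2*(1+p^2)*q'^2 := by
    rw [d1, d2, ← hs2]
    field_simp
    linear_combination (p^2*p'^2 + s^4*q'^2) * hCS
  have harc : c^2*p'^2 + a^2*p^2*p'^2/(1+p^2) + a^2*(1+p^2)*q'^2 = 1 := by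
    have h := harclength t
    rw [Fin.sum_univ_three, d0] at h
    linear_combination h - hsum12
  -- the two factors of J
  have hfac1 : (∑ i, (B i * x t i)^2) = p^2/c^2 + (1+p^2)/a^2 := by
    rw [Fin.sum_univ_three, hB, hx0 t, hx1 t, hx2 t, ← hsdef, ← hC, ← hS, ← hs2]
    simp only [Matrix.cons_val_zero, Matrix.cons_val_one, Matrix.head_cons,
      Matrix.cons_val_two, Matrix.tail_cons]
    field_simp
    linear_combination (c^2*s^2) * hCS
  have hfac2 : (∑ i, B i * (deriv (fun s => x s i) t)^2)
      = -(p'^2) + p^2*p'^2/(1+p^2) + (1+p^2)*q'^2 := by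
    rw [Fin.sum_univ_three, hB, d0]
    simp only [Matrix.cons_val_zero, Matrix.cons_val_one, Matrix.head_cons,
      Matrix.cons_val_two, Matrix.tail_cons]
    have : (1/a^2) * (deriv (fun u => x u 1) t)^2 + (1/a^2) * (deriv (fun u => x u 2) t)^2
        = p^2*p'^2/(1+p^2) + (1+p^2)*q'^2 := by
      have h12 := hsum12
      field_simp at h12 ⊢
      linear_combination h12
    field_simp at this ⊢
    linear_combination this
  rw [hJ t, hI t, hfac1, hfac2, hH]
  have := joach_key a c b p p' q' ha.ne' hc.ne' hb harc
  linarith [this]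
end

section
/- The map σ(x) = x/(Bx,x), defined on {x ∈ ℝ^{n+1} : (Bx,x) ≠ 0}, is an involution (σ∘σ = id), fixes the quadric (Bx,x) = 1 pointwise, and is an isometry of the conformally flat metric ds₁² = (Bdx,dx)/|Bx|²; explicitly, if y = σ(x) then (Bdy,dy)/|By|² = (Bdx,dx)/|Bx|² as quadratic forms on tangent vectors. -/
/-!
Write `Q(x) = (Bx,x)`. Since `Q` is quadratic, `Q(σ x) = 1 / Q(x)`, which gives `σ ∘ σ = id`, and
`|B σ(x)|² = |Bx|² / Q(x)²`. The differential is `Dσ(x) v = R_x v / Q(x)`, where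
`R_x v = v - 2 (Bx,v)/(Bx,x) x` is the `B`-orthogonal reflection in `x`; a reflection preserves
`Q`, so `Q(Dσ(x) v) = Q(v) / Q(x)²` and the two factors `Q(x)²` cancel.
-/

open Finset

section

variable {ι : Type*} [Fintype ι] (b : ι → ℝ)

theorem sum_mul_div_mul_div (x : ι → ℝ) (c : ℝ) :
    ∑ i, b i * (x i / c) * (x i / c) = (∑ i, b i * x i * x i) / c ^ 2 := by
  rw [sum_div]
  congr 1 with i
  ring

theorem sum_mul_div_sq (x : ι → ℝ) (c : ℝ) :
    ∑ i, b i * (x i / c) ^ 2 = (∑ i, b i * x i ^ 2) / c ^ 2 := by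
  rw [sum_div]
  congr 1 with i
  ring

theorem sum_sq_mul_div (x : ι → ℝ) (c : ℝ) :
    ∑ i, (b i * (x i / c)) ^ 2 = (∑ i, (b i * x i) ^ 2) / c ^ 2 := by
  rw [sum_div]
  congr 1 with i
  ring

theorem sum_mul_sub_mul_sq (x v : ι → ℝ) (c : ℝ) :
    ∑ i, b i * (v i - c * x i) ^ 2 =
      ∑ i, b i * v i ^ 2 - 2 * c * ∑ i, b i * x i * v i + c ^ 2 * ∑ i, b i * x i * x i := by
  simp only [mul_sum, ← sum_sub_distrib, ← sum_add_distrib]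
  congr 1 with i
  ring

theorem sum_mul_reflection_sq {x : ι → ℝ} (v : ι → ℝ) (hx : ∑ i, b i * x i * x i ≠ 0) :
    ∑ i, b i * (v i - 2 * (∑ j, b j * x j * v j) / (∑ j, b j * x j * x j) * x i) ^ 2 =
      ∑ i, b i * v i ^ 2 := by
  rw [sum_mul_sub_mul_sq]
  generalize ∑ j, b j * x j * x j = Q at hx ⊢
  field_simp
  ring

end

theorem sigma_involution_isometry_general (n : ℕ) (b : Fin (n+1) → ℝ) :
    (∀ x : Fin (n+1) → ℝ, (∑ i, b i * x i * x i) ≠ 0 →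
      (fun i => (x i / (∑ j, b j * x j * x j)) /
        (∑ j, b j * (x j / (∑ l, b l * x l * x l)) * (x j / (∑ l, b l * x l * x l))))
        = x) ∧
    (∀ x : Fin (n+1) → ℝ, (∑ i, b i * x i * x i) = 1 →
      (fun i => x i / (∑ j, b j * x j * x j)) = x) ∧
    (∀ (x v : Fin (n+1) → ℝ), (∑ i, b i * x i * x i) ≠ 0 →
      (∑ i, b i * (v i / (∑ j, b j * x j * x j) -
          2 * x i * (∑ j, b j * x j * v j) / (∑ j, b j * x j * x j)^2)^2) /
        (∑ i, (b i * (x i / (∑ j, b j * x j * x j)))^2) =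
      (∑ i, b i * (v i)^2) / (∑ i, (b i * x i)^2)) := by
  refine ⟨fun x hx => ?_, fun x hx => by simp only [hx, div_one], fun x v hx => ?_⟩
  · ext i
    rw [sum_mul_div_mul_div]
    generalize ∑ j, b j * x j * x j = Q at hx ⊢
    field_simp
  · have hDσ : ∀ i, v i / (∑ j, b j * x j * x j) -
        2 * x i * (∑ j, b j * x j * v j) / (∑ j, b j * x j * x j) ^ 2 =
          (v i - 2 * (∑ j, b j * x j * v j) / (∑ j, b j * x j * x j) * x i) /
            ∑ j, b j * x j * x j := fun i => by ring
    rw [sum_congr rfl fun i _ => by rw [hDσ], sum_mul_div_sq, sum_mul_reflection_sq b v hx,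
      sum_sq_mul_div]
    exact div_div_div_cancel_right₀ (pow_ne_zero 2 hx) _ _

/-- The map σ(x) = x/(Bx,x) is an involution, fixes the quadric (Bx,x)=1
pointwise, and is an isometry of the conformally flat metric
ds₁² = (Bdx,dx)/|Bx|². -/
theorem sigma_involution_isometry (n : ℕ) (b : Fin (n+1) → ℝ) (hb : ∀ i, b i ≠ 0) :
    (∀ x : Fin (n+1) → ℝ, (∑ i, b i * x i * x i) ≠ 0 →
      (fun i => (x i / (∑ j, b j * x j * x j)) /
        (∑ j, b j * (x j / (∑ l, b l * x l * x l)) * (x j / (∑ l, b l * x l * x l))))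
        = x) ∧
    (∀ x : Fin (n+1) → ℝ, (∑ i, b i * x i * x i) = 1 →
      (fun i => x i / (∑ j, b j * x j * x j)) = x) ∧
    (∀ (x v : Fin (n+1) → ℝ), (∑ i, b i * x i * x i) ≠ 0 →
      (∑ i, b i * (v i / (∑ j, b j * x j * x j) -
          2 * x i * (∑ j, b j * x j * v j) / (∑ j, b j * x j * x j)^2)^2) /
        (∑ i, (b i * (x i / (∑ j, b j * x j * x j)))^2) =
      (∑ i, b i * (v i)^2) / (∑ i, (b i * x i)^2)) :=
  sigma_involution_isometry_general n b
end

section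
/- A curve x(τ) on the quadric (Bx,x)=1 satisfying the Kn\u00f6rrer equation ẍ + 2(γ̇/γ)ẋ + εBx = 0, where γ = 1/|Bx| and (Bẋ,ẋ)/|Bx|² = ε, is a geodesic of the metric ds₁² = (Bdx,dx)/|Bx|² on ℝ^{n+1}: its second covariant derivative ∇²x = ẍ + 2(γ̇/γ)ẋ + ((Bẋ,ẋ)/|Bx|²)Bx vanishes. The Christoffel symbols of ds₁² satisfy Γ^i_{jk} = 0 for distinct i,j,k, Γ^i_{ik} = ∂_k log γ, and Γ^i_{jj} = −(b_j/b_i)∂_i log γ for j ≠ i. -/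
private lemma hasFDerivAt_sumSq {N : ℕ} (b : Fin N → ℝ) (y : Fin N → ℝ) :
    HasFDerivAt (fun z : Fin N → ℝ => ∑ k, (b k)^2 * (z k)^2)
      (∑ k, (2*(b k)^2 * y k) • (ContinuousLinearMap.proj k : (Fin N → ℝ) →L[ℝ] ℝ)) y := by
  refine HasFDerivAt.fun_sum fun k _ => ?_
  have h := (((ContinuousLinearMap.proj k : (Fin N → ℝ) →L[ℝ] ℝ).hasFDerivAt (x := y)).mul
    ((ContinuousLinearMap.proj k : (Fin N → ℝ) →L[ℝ] ℝ).hasFDerivAt (x := y))).const_mul ((b k)^2)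
  have e : (2*(b k)^2 * y k) • (ContinuousLinearMap.proj k : (Fin N → ℝ) →L[ℝ] ℝ) =
      (b k)^2 • ((ContinuousLinearMap.proj k : (Fin N → ℝ) →L[ℝ] ℝ) y •
        (ContinuousLinearMap.proj k : (Fin N → ℝ) →L[ℝ] ℝ) +
        (ContinuousLinearMap.proj k : (Fin N → ℝ) →L[ℝ] ℝ) y •
        (ContinuousLinearMap.proj k : (Fin N → ℝ) →L[ℝ] ℝ)) := by
    ext v; simp only [ContinuousLinearMap.add_apply, ContinuousLinearMap.smul_apply,
      ContinuousLinearMap.proj_apply, smul_eq_mul]; ring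
  rw [e]
  exact h.congr_of_eventuallyEq (Filter.Eventually.of_forall fun z => by
    simp only [Pi.mul_apply, ContinuousLinearMap.proj_apply]; ring)

private lemma sumSq_deriv_apply {N : ℕ} (b : Fin N → ℝ) (y : Fin N → ℝ) (j : Fin N) :
    (∑ k, (2*(b k)^2 * y k) • (ContinuousLinearMap.proj k : (Fin N → ℝ) →L[ℝ] ℝ))
      (Pi.single j 1) = 2*(b j)^2 * y j := by
  simp [ContinuousLinearMap.sum_apply, Pi.single_apply, mul_ite, mul_one, mul_zero,
    Finset.sum_ite_eq']

/-- A curve satisfying Knörrer's equation ẍ + 2(γ̇/γ)ẋ + εBx = 0 on (Bx,x)=1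
is a geodesic of the metric ds₁² = (Bdx,dx)/|Bx|²: its second covariant
derivative ∇²x = ẍ + 2(γ̇/γ)ẋ + ((Bẋ,ẋ)/|Bx|²)Bx vanishes. The Christoffel
symbols of ds₁² satisfy Γ^i_{jk}=0 for distinct i,j,k, Γ^i_{ik}=∂_k log γ,
and Γ^i_{jj} = −(b_j/b_i)∂_i log γ for j ≠ i. -/
theorem knorrer_geodesic_of_projective_metric (n : ℕ) (b : Fin (n+1) → ℝ)
    (hb : ∀ i, b i ≠ 0)
    (γ : (Fin (n+1) → ℝ) → ℝ)
    (hγ : ∀ y, γ y = (Real.sqrt (∑ k, (b k)^2 * (y k)^2))⁻¹)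
    (g : Fin (n+1) → Fin (n+1) → (Fin (n+1) → ℝ) → ℝ)
    (hg : ∀ i j y, g i j y = if i = j then b i * (γ y)^2 else 0)
    (Γ : Fin (n+1) → Fin (n+1) → Fin (n+1) → (Fin (n+1) → ℝ) → ℝ)
    (hΓ : ∀ i j k y, Γ i j k y = (1/2) * ∑ m,
      (if i = m then (b i * (γ y)^2)⁻¹ else 0) *
        (fderiv ℝ (g m k) y (Pi.single j 1) + fderiv ℝ (g m j) y (Pi.single k 1)
          - fderiv ℝ (g j k) y (Pi.single m 1)))
    (x : ℝ → Fin (n+1) → ℝ) (ε : ℝ) (hε : ε = 1 ∨ ε = -1)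
    (hxsmooth : ∀ i, ContDiff ℝ (⊤ : ℕ∞) (fun τ => x τ i))
    (hconstraint : ∀ τ, ∑ i, b i * x τ i * x τ i = 1)
    (hBxx : ∀ τ, ∑ j, b j * (deriv (fun t => x t j) τ)^2 = ε * ∑ j, (b j * x τ j)^2)
    (hknorrer : ∀ τ i, deriv (deriv (fun t => x t i)) τ +
      2 * (deriv (fun t => γ (x t)) τ / γ (x τ)) * deriv (fun t => x t i) τ =
      -(ε * (b i * x τ i))) :
    (∀ (y : Fin (n+1) → ℝ), (∑ k, (b k)^2 * (y k)^2) ≠ 0 →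
      (∀ i j k : Fin (n+1), i ≠ j → j ≠ k → i ≠ k → Γ i j k y = 0) ∧
      (∀ i k : Fin (n+1), Γ i i k y =
        fderiv ℝ (fun z => Real.log (γ z)) y (Pi.single k 1)) ∧
      (∀ i j : Fin (n+1), j ≠ i → Γ i j j y =
        -(b j / b i) * fderiv ℝ (fun z => Real.log (γ z)) y (Pi.single i 1))) ∧
    (∀ τ (i : Fin (n+1)), deriv (deriv (fun t => x t i)) τ +
      2 * (deriv (fun t => γ (x t)) τ / γ (x τ)) * deriv (fun t => x t i) τ +
      ((∑ j, b j * (deriv (fun t => x t j) τ)^2) / (∑ j, (b j * x τ j)^2)) *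
        (b i * x τ i) = 0) := by
  constructor
  · intro y hy
    have hFnonneg : (0:ℝ) ≤ ∑ k, (b k)^2 * (y k)^2 :=
      Finset.sum_nonneg fun k _ => mul_nonneg (sq_nonneg _) (sq_nonneg _)
    have hFpos : 0 < ∑ k, (b k)^2 * (y k)^2 := lt_of_le_of_ne hFnonneg (Ne.symm hy)
    have hγsq : ∀ z : Fin (n+1) → ℝ, (γ z)^2 = (∑ k, (b k)^2 * (z k)^2)⁻¹ := by
      intro z
      have hz : (0:ℝ) ≤ ∑ k, (b k)^2 * (z k)^2 :=
        Finset.sum_nonneg fun k _ => mul_nonneg (sq_nonneg _) (sq_nonneg _)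
      rw [hγ, inv_pow, Real.sq_sqrt hz]
    -- derivative of the metric coefficients
    have hDg : ∀ (m k j : Fin (n+1)),
        fderiv ℝ (g m k) y (Pi.single j 1) =
          if m = k then -(2 * b m * (b j)^2 * y j) / (∑ k, (b k)^2 * (y k)^2)^2 else 0 := by
      intro m k j
      by_cases hmk : m = k
      · subst hmk
        have hgfun : g m m = fun z => b m * (∑ k, (b k)^2 * (z k)^2)⁻¹ := by
          funext z; rw [hg, if_pos rfl, hγsq]
        have hD : HasFDerivAt (fun z => b m * (∑ k, (b k)^2 * (z k)^2)⁻¹)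
            ((b m) • ((-((∑ k, (b k)^2 * (y k)^2) ^ 2)⁻¹) •
              (∑ k, (2*(b k)^2 * y k) • (ContinuousLinearMap.proj k :
                (Fin (n+1) → ℝ) →L[ℝ] ℝ)))) y :=
          ((hasDerivAt_inv hy).comp_hasFDerivAt y (hasFDerivAt_sumSq b y)).const_mul (b m)
        rw [hgfun, if_pos rfl, hD.fderiv]
        simp only [ContinuousLinearMap.smul_apply, smul_eq_mul, ContinuousLinearMap.neg_apply,
          sumSq_deriv_apply]
        field_simp
      · have hz : g m k = fun _ => 0 := by funext z; rw [hg, if_neg hmk]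
        rw [hz, if_neg hmk, fderiv_fun_const]
        simp
    have hcont : Continuous (fun z : Fin (n+1) → ℝ => ∑ k, (b k)^2 * (z k)^2) := by
      fun_prop
    have hDlog : ∀ k : Fin (n+1),
        fderiv ℝ (fun z => Real.log (γ z)) y (Pi.single k 1) =
          -((b k)^2 * y k) / (∑ k, (b k)^2 * (y k)^2) := by
      intro k
      have hnb : ∀ᶠ z in nhds y, 0 < ∑ k, (b k)^2 * (z k)^2 :=
        hcont.continuousAt (Ioi_mem_nhds hFpos)
      have hev : (fun z => Real.log (γ z)) =ᶠ[nhds y]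
          (fun z => (-(1:ℝ)/2) * Real.log (∑ k, (b k)^2 * (z k)^2)) := by
        filter_upwards [hnb] with z hz
        rw [hγ, Real.log_inv, Real.log_sqrt hz.le]; ring
      rw [Filter.EventuallyEq.fderiv_eq hev]
      have hD := ((hasFDerivAt_sumSq b y).log hy).const_mul ((-(1:ℝ))/2)
      rw [hD.fderiv]
      simp only [ContinuousLinearMap.smul_apply, smul_eq_mul, sumSq_deriv_apply]
      field_simp
    have hΓval : ∀ i j k : Fin (n+1), Γ i j k y =
        (1/2) * ((b i * (∑ k, (b k)^2 * (y k)^2)⁻¹)⁻¹ *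
          (fderiv ℝ (g i k) y (Pi.single j 1) + fderiv ℝ (g i j) y (Pi.single k 1)
            - fderiv ℝ (g j k) y (Pi.single i 1))) := by
      intro i j k
      rw [hΓ, hγsq]
      simp only [ite_mul, zero_mul, Finset.sum_ite_eq, Finset.mem_univ, if_true]
    refine ⟨fun i j k hij hjk hik => ?_, fun i k => ?_, fun i j hji => ?_⟩
    · rw [hΓval, hDg, hDg, hDg, if_neg hik, if_neg hij, if_neg hjk]
      ring
    · have e1 : fderiv ℝ (g i k) y (Pi.single i 1) + fderiv ℝ (g i i) y (Pi.single k 1)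
          - fderiv ℝ (g i k) y (Pi.single i 1) = fderiv ℝ (g i i) y (Pi.single k 1) := by
        ring
      rw [hΓval, e1, hDg i i k, if_pos rfl, hDlog k]
      field_simp [hb i]
    · rw [hΓval, hDg i j j, if_neg (Ne.symm hji), hDg j j i, if_pos rfl, hDlog i]
      field_simp [hb i]
      ring
  · intro τ i
    have hS : (∑ j, (b j * x τ j)^2) ≠ 0 := by
      intro h0
      have hz := (Finset.sum_eq_zero_iff_of_nonneg
        (fun j _ => sq_nonneg (b j * x τ j))).mp h0
      have hzero : (∑ i, b i * x τ i * x τ i) = 0 := by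
        refine Finset.sum_eq_zero fun j _ => ?_
        have h1 : b j * x τ j = 0 := by
          have := hz j (Finset.mem_univ j)
          exact (pow_eq_zero_iff two_ne_zero).mp this
        calc b j * x τ j * x τ j = (b j * x τ j) * x τ j := by ring
        _ = 0 := by rw [h1, zero_mul]
      rw [hconstraint τ] at hzero
      exact one_ne_zero hzero
    have hratio : (∑ j, b j * (deriv (fun t => x t j) τ)^2) / (∑ j, (b j * x τ j)^2) = ε := by
      rw [hBxx τ, mul_div_assoc, div_self hS, mul_one]
    rw [hratio]
    linarith [hknorrer τ i]
end

section
/- Under the Liouville transformation dτ/dρ = α, ψ₁(ρ) = α^{-1/2}φ(τ), with α² = 2(c²+b²ρ²)/(1+ρ²), the eigenvalue equation (1/2)[−((1+ρ²)/(c²+b²ρ²))ψ₁'' + (k²/(a²(1+ρ²)))ψ₁] = Eψ₁ transforms into the Schrödinger equation −φ'' + V(τ)φ = Eφ with V = k²/(2a²(1+ρ²)) − a²[6b²ρ⁴+(3b²+c²)ρ²−2c²]/(8(c²+b²ρ²)³(1+ρ²)). -/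
noncomputable def Fl (b c ρ : ℝ) : ℝ := 2 * (c^2 + b^2 * ρ^2) / (1 + ρ^2)
noncomputable def F1 (a ρ : ℝ) : ℝ := 4 * a^2 * ρ / (1 + ρ^2)^2
noncomputable def F2 (a ρ : ℝ) : ℝ := 4 * a^2 * (1 - 3*ρ^2) / (1 + ρ^2)^3

lemma Fl_pos (b c : ℝ) (hc : 0 < c) (ρ : ℝ) : 0 < Fl b c ρ := by
  unfold Fl; positivity

lemma hasDerivAt_Fl (a b c : ℝ) (hb : b^2 = a^2 + c^2) (ρ : ℝ) :
    HasDerivAt (fun u => Fl b c u) (F1 a ρ) ρ := by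
  have hD0 : (0:ℝ) < 1 + ρ^2 := by positivity
  have h1 : HasDerivAt (fun u : ℝ => u^2) (2*ρ) ρ := by
    simpa using hasDerivAt_pow 2 ρ
  have hD : HasDerivAt (fun u : ℝ => 1 + u^2) (2*ρ) ρ := h1.const_add 1
  have hN : HasDerivAt (fun u : ℝ => 2*(c^2 + b^2*u^2)) (2*(b^2*(2*ρ))) ρ :=
    ((h1.const_mul (b^2)).const_add (c^2)).const_mul 2
  have h := hN.div hD hD0.ne'
  have heq2 : F1 a ρ = (2*(b^2*(2*ρ)) * (1+ρ^2) - 2*(c^2+b^2*ρ^2)*(2*ρ))/(1+ρ^2)^2 := by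
    unfold F1; rw [hb]; field_simp; ring
  rw [show (fun u => Fl b c u) = fun u : ℝ => 2*(c^2 + b^2*u^2)/(1+u^2) from rfl, heq2]
  exact h

lemma hasDerivAt_F1 (a ρ : ℝ) : HasDerivAt (fun u => F1 a u) (F2 a ρ) ρ := by
  have hD0 : (0:ℝ) < 1 + ρ^2 := by positivity
  have h1 : HasDerivAt (fun u : ℝ => u^2) (2*ρ) ρ := by
    simpa using hasDerivAt_pow 2 ρ
  have hD : HasDerivAt (fun u : ℝ => 1 + u^2) (2*ρ) ρ := h1.const_add 1
  have hD2 : HasDerivAt (fun u : ℝ => (1+u^2)^2) (((2:ℕ):ℝ) * (1+ρ^2)^1 * (2*ρ)) ρ := hD.pow 2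
  have hN : HasDerivAt (fun u : ℝ => 4*a^2*u) (4*a^2) ρ := by
    simpa using (hasDerivAt_id ρ).const_mul (4*a^2)
  have h := hN.div hD2 (by positivity)
  have heq2 : F2 a ρ = (4*a^2 * (1+ρ^2)^2 - 4*a^2*ρ*(((2:ℕ):ℝ) * (1+ρ^2)^1 * (2*ρ)))/((1+ρ^2)^2)^2 := by
    unfold F2; push_cast; field_simp; ring
  rw [show (fun u => F1 a u) = fun u : ℝ => 4*a^2*u/(1+u^2)^2 from rfl, heq2]
  exact h

lemma key_algebra (a b c ρ P P'' s kk : ℝ) (ha : 0 < a) (hc : 0 < c)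
    (hb : b^2 = a^2 + c^2) (hs : 0 < s) (hs4 : s^4 = Fl b c ρ) :
    -P'' + (kk^2 / (2 * a^2 * (1 + ρ^2)) -
        a^2 * (6 * b^2 * ρ^4 + (3 * b^2 + c^2) * ρ^2 - 2 * c^2) /
          (8 * (c^2 + b^2 * ρ^2)^3 * (1 + ρ^2))) * P
      = s * ((1/2) * (-((1 + ρ^2) / (c^2 + b^2 * ρ^2)) *
          (P'' * s^3 - F2 a ρ * P / (4*s^5) + 5*(F1 a ρ)^2*P/(16*s^9)) +
          (kk^2 / (a^2 * (1 + ρ^2))) * (P * s⁻¹))) := by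
  have hD0 : (0:ℝ) < 1 + ρ^2 := by positivity
  have hN0 : (0:ℝ) < c^2 + b^2*ρ^2 := by positivity
  have hs0 : s ≠ 0 := ne_of_gt hs
  have ha0 : a ≠ 0 := ne_of_gt ha
  have hD0' : (1:ℝ) + ρ^2 ≠ 0 := ne_of_gt hD0
  have hN0' : c^2 + b^2*ρ^2 ≠ 0 := ne_of_gt hN0
  have h1 : s * ((1/2) * (-((1 + ρ^2) / (c^2 + b^2 * ρ^2)) *
          (P'' * s^3 - F2 a ρ * P / (4*s^5) + 5*(F1 a ρ)^2*P/(16*s^9)) +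
          (kk^2 / (a^2 * (1 + ρ^2))) * (P * s⁻¹)))
      = (1/2) * (-((1 + ρ^2) / (c^2 + b^2 * ρ^2)) *
          (P'' * (s^4) - F2 a ρ * P / (4*(s^4)) + 5*(F1 a ρ)^2*P/(16*(s^4)^2)) +
          (kk^2 / (a^2 * (1 + ρ^2))) * P) := by
    field_simp
  rw [h1, hs4]
  unfold Fl F1 F2
  rw [hb]
  rw [hb] at hN0'
  field_simp
  ring

/-- The Liouville transformation dτ/dρ = α, ψ₁ = α^{-1/2}φ(τ),
α² = 2(c²+b²ρ²)/(1+ρ²), turns the separated radial equation on the symmetric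
hyperboloid into the Schrödinger equation −φ'' + Vφ = Eφ with
V = k²/(2a²(1+ρ²)) − a²[6b²ρ⁴+(3b²+c²)ρ²−2c²]/(8(c²+b²ρ²)³(1+ρ²)). -/
theorem liouville_transformation (a c : ℝ) (ha : 0 < a) (hc : 0 < c)
    (b : ℝ) (hb : b^2 = a^2 + c^2) (k : ℕ) (E : ℝ)
    (φ τ ψ₁ α : ℝ → ℝ)
    (hφ : ContDiff ℝ (⊤ : ℕ∞) φ) (hτ : ContDiff ℝ (⊤ : ℕ∞) τ)
    (hα : ∀ ρ, α ρ = Real.sqrt (2 * (c^2 + b^2 * ρ^2) / (1 + ρ^2)))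
    (hτ' : ∀ ρ, deriv τ ρ = α ρ)
    (hψ : ∀ ρ, ψ₁ ρ = φ (τ ρ) / Real.sqrt (α ρ))
    (heq : ∀ ρ, (1/2) * (-((1 + ρ^2) / (c^2 + b^2 * ρ^2)) * deriv (deriv ψ₁) ρ +
      (k^2 / (a^2 * (1 + ρ^2))) * ψ₁ ρ) = E * ψ₁ ρ) :
    ∀ ρ, -(deriv (deriv φ) (τ ρ)) +
      (k^2 / (2 * a^2 * (1 + ρ^2)) -
        a^2 * (6 * b^2 * ρ^4 + (3 * b^2 + c^2) * ρ^2 - 2 * c^2) /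
          (8 * (c^2 + b^2 * ρ^2)^3 * (1 + ρ^2))) * φ (τ ρ) =
      E * φ (τ ρ) := by
  intro ρ
  have hf0 : ∀ r : ℝ, 0 < Fl b c r := Fl_pos b c hc
  have hαf : ∀ r : ℝ, α r = Fl b c r ^ ((1:ℝ)/2) := by
    intro r
    rw [hα r, show 2 * (c ^ 2 + b ^ 2 * r ^ 2) / (1 + r ^ 2) = Fl b c r from rfl,
      Real.sqrt_eq_rpow]
  have hτd : ∀ r : ℝ, HasDerivAt τ (α r) r := by
    intro r
    have h := (hτ.differentiable (by simp) r).hasDerivAt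
    rwa [hτ' r] at h
  have hφ2 : ContDiff ℝ ((⊤:ℕ∞):WithTop ℕ∞) φ := hφ.of_le (by simp)
  have hτ2 : ContDiff ℝ ((⊤:ℕ∞):WithTop ℕ∞) τ := hτ.of_le (by simp)
  obtain ⟨hφd, hφ'cd⟩ := contDiff_infty_iff_deriv.mp hφ2
  have hφ'd := (contDiff_infty_iff_deriv.mp hφ'cd).1
  have hφτ : ∀ r : ℝ, HasDerivAt (fun u => φ (τ u)) (deriv φ (τ r) * α r) r :=
    fun r => HasDerivAt.comp r (hφd (τ r)).hasDerivAt (hτd r)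
  have hφ'τ : ∀ r : ℝ, HasDerivAt (fun u => deriv φ (τ u)) (deriv (deriv φ) (τ r) * α r) r :=
    fun r => HasDerivAt.comp r (hφ'd (τ r)).hasDerivAt (hτd r)
  have hFld : ∀ r : ℝ, HasDerivAt (fun u => Fl b c u) (F1 a r) r := hasDerivAt_Fl a b c hb
  have hFd : ∀ r : ℝ, HasDerivAt (fun u => Fl b c u ^ (-(1/4) : ℝ))
      (F1 a r * (-(1/4)) * Fl b c r ^ (-(1/4) - 1 : ℝ)) r :=
    fun r => (hFld r).rpow_const (Or.inl (hf0 r).ne')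
  have hψfun : ψ₁ = fun u => φ (τ u) * Fl b c u ^ (-(1/4) : ℝ) := by
    funext u
    have h1 : Real.sqrt (α u) = Fl b c u ^ ((1:ℝ)/4) := by
      rw [hαf u, Real.sqrt_eq_rpow, ← Real.rpow_mul (hf0 u).le]
      norm_num
    rw [hψ u, h1, Real.rpow_neg (hf0 u).le, div_eq_mul_inv]
  have eγ : ∀ r : ℝ, α r * Fl b c r ^ (-(1/4) : ℝ) = Fl b c r ^ ((1:ℝ)/4) := by
    intro r
    rw [hαf r, ← Real.rpow_add (hf0 r)]
    norm_num
  have hψ'fun : deriv ψ₁ = fun u => deriv φ (τ u) * Fl b c u ^ ((1:ℝ)/4) +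
      φ (τ u) * (F1 a u * (-(1/4)) * Fl b c u ^ (-(1/4) - 1 : ℝ)) := by
    funext u
    have h2 := (hφτ u).mul (hFd u)
    rw [mul_assoc, eγ u] at h2
    rw [hψfun]
    exact h2.deriv
  have hbig : HasDerivAt (fun u => deriv φ (τ u) * Fl b c u ^ ((1:ℝ)/4) +
      φ (τ u) * (F1 a u * (-(1/4)) * Fl b c u ^ (-(1/4) - 1 : ℝ)))
      ((deriv (deriv φ) (τ ρ) * α ρ) * Fl b c ρ ^ ((1:ℝ)/4) +
        deriv φ (τ ρ) * (F1 a ρ * ((1:ℝ)/4) * Fl b c ρ ^ ((1:ℝ)/4 - 1)) +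
       ((deriv φ (τ ρ) * α ρ) * (F1 a ρ * (-(1/4)) * Fl b c ρ ^ (-(1/4) - 1 : ℝ)) +
        φ (τ ρ) * (F2 a ρ * (-(1/4)) * Fl b c ρ ^ (-(1/4) - 1 : ℝ) +
          F1 a ρ * (-(1/4)) * (F1 a ρ * (-(1/4) - 1) * Fl b c ρ ^ (-(1/4) - 1 - 1 : ℝ))))) ρ :=
    ((hφ'τ ρ).mul ((hFld ρ).rpow_const (Or.inl (hf0 ρ).ne'))).add
      ((hφτ ρ).mul (((hasDerivAt_F1 a ρ).mul_const (-(1/4) : ℝ)).mul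
        ((hFld ρ).rpow_const (Or.inl (hf0 ρ).ne'))))
  obtain ⟨s, hsdef⟩ : ∃ s, Fl b c ρ ^ ((1:ℝ)/4) = s := ⟨_, rfl⟩
  have hs0 : 0 < s := hsdef ▸ Real.rpow_pos_of_pos (hf0 ρ) _
  have hsn : ∀ n : ℕ, Fl b c ρ ^ (((n:ℕ):ℝ)/4) = s^n := by
    intro n
    rw [← hsdef, ← Real.rpow_natCast (Fl b c ρ ^ ((1:ℝ)/4)) n, ← Real.rpow_mul (hf0 ρ).le]
    congr 1
    ring
  have hs4 : s^4 = Fl b c ρ := by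
    have h := hsn 4
    rw [show (((4:ℕ):ℝ))/4 = (1:ℝ) by norm_num, Real.rpow_one] at h
    exact h.symm
  have eneg : ∀ n : ℕ, Fl b c ρ ^ (-(((n:ℕ):ℝ)/4)) = (s^n)⁻¹ := by
    intro n
    rw [Real.rpow_neg (hf0 ρ).le, hsn n]
  have es3 : Fl b c ρ ^ ((1:ℝ)/4 - 1) = (s^3)⁻¹ := by
    rw [show ((1:ℝ)/4 - 1) = -((((3:ℕ):ℝ))/4) by norm_num]
    exact eneg 3
  have es5 : Fl b c ρ ^ (-(1/4) - 1 : ℝ) = (s^5)⁻¹ := by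
    rw [show (-(1/4) - 1 : ℝ) = -((((5:ℕ):ℝ))/4) by norm_num]
    exact eneg 5
  have es9 : Fl b c ρ ^ (-(1/4) - 1 - 1 : ℝ) = (s^9)⁻¹ := by
    rw [show (-(1/4) - 1 - 1 : ℝ) = -((((9:ℕ):ℝ))/4) by norm_num]
    exact eneg 9
  have es1 : Fl b c ρ ^ (-(1/4) : ℝ) = s⁻¹ := by
    rw [show (-(1/4) : ℝ) = -((((1:ℕ):ℝ))/4) by norm_num]
    have h := eneg 1
    rwa [pow_one] at h
  have eα2 : α ρ = s^2 := by
    rw [hαf ρ, show ((1:ℝ)/2) = (((2:ℕ):ℝ))/4 by norm_num]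
    exact hsn 2
  have hcanon : deriv (deriv ψ₁) ρ = deriv (deriv φ) (τ ρ) * s^3 -
      F2 a ρ * φ (τ ρ) / (4*s^5) + 5*(F1 a ρ)^2*φ (τ ρ)/(16*s^9) := by
    rw [hψ'fun, hbig.deriv, eα2, hsdef, es3, es5, es9]
    field_simp
    ring
  have hψρ : ψ₁ ρ = φ (τ ρ) * s⁻¹ := by
    rw [hψfun]
    simp only []
    rw [es1]
  have heq0 := heq ρ
  rw [hψρ, hcanon] at heq0
  have halg := key_algebra a b c ρ (φ (τ ρ)) (deriv (deriv φ) (τ ρ)) s ((k:ℝ)) ha hc hb hs0 hs4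
  rw [halg, heq0]
  field_simp
end
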